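/- arXiv:1909.03145 — 12 statements merged into one kernel-verified Lean document; each statement's English description precedes it below -/
import Mathlib

section
/- Let A be a d×d real symmetric positive definite matrix with smallest eigenvalue μ > 0 and largest eigenvalue L, and condition number κ(A) = L/μ. Define the 2d×2d block matrices G_HB = [[0, I], [−A/μ, −2I]] and G_NAG = [[−I, I], [I − A/μ, −I]]. Then every complex eigenvalue λ of G_HB and every complex eigenvalue λ of G_NAG satisfies Re(λ) < 0, and moreover κ(G_HB) = κ(G_NAG) = √(κ(A)). -/
open Matrix

/-- Spectral radius of a real square matrix: maximum modulus of its complex eigenvalues. -/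
noncomputable def specRad {n : Type*} [Fintype n] [DecidableEq n] (M : Matrix n n ℝ) : ℝ :=
  sSup {r : ℝ | ∃ z ∈ spectrum ℂ (M.map Complex.ofReal), r = ‖z‖}

/-- Condition number κ(M) = ρ(M⁻¹)·ρ(M). -/
noncomputable def condNumber {n : Type*} [Fintype n] [DecidableEq n]
    (M : Matrix n n ℝ) : ℝ :=
  specRad M⁻¹ * specRad M

/-!
An eigenvector `(x, y)` of `[[a I, I], [b I - B, c I]]` for the eigenvalue `z` has `y = (z - a) x`
and `B x = (b - (z - a)(z - c)) x`. For both `G_HB` and `G_NAG` (with `B = A / μ`) this says that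
`z` is an eigenvalue exactly when `z² + 2z + β = 0` for an eigenvalue `β ∈ [1, κ(A)]` of `B`. The
roots are `-1 ± i √(β - 1)`: real part `-1` and modulus `√β`. So `ρ(G) = √κ(A)`, and since the
eigenvalues of `G⁻¹` have modulus `1 / √β`, attaining `1` at `β = 1`, `ρ(G⁻¹) = 1`.
-/

open scoped Pointwise

namespace Matrix

variable {n : Type*} [Fintype n] [DecidableEq n]

section Field

variable {K : Type*} [Field K]

theorem mem_spectrum_iff_exists_mulVec_eq_smul {M : Matrix n n K} {z : K} :
    z ∈ spectrum K M ↔ ∃ v ≠ 0, M *ᵥ v = z • v := by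
  rw [← spectrum_toLin', ← Module.End.hasEigenvalue_iff_mem_spectrum,
    Module.End.hasEigenvalue_iff, Submodule.ne_bot_iff]
  simp only [Module.End.mem_eigenspace_iff, toLin'_apply]
  exact exists_congr fun v => and_comm

theorem mem_spectrum_fromBlocks_smul_one_iff (B : Matrix n n K) (a b c z : K) :
    z ∈ spectrum K (fromBlocks (a • 1) (1 : Matrix n n K) (b • 1 - B) (c • 1)) ↔
      b - (z - a) * (z - c) ∈ spectrum K B := by
  simp only [mem_spectrum_iff_exists_mulVec_eq_smul, fromBlocks_mulVec]
  constructor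
  · rintro ⟨v, hv, hMv⟩
    obtain ⟨x, y, rfl⟩ : ∃ x y, v = Sum.elim x y := ⟨_, _, (Sum.elim_comp_inl_inr v).symm⟩
    have h1 : a • x + y = z • x := funext fun i => by
      simpa [smul_mulVec] using congrFun hMv (Sum.inl i)
    have h2 : b • x - B *ᵥ x + c • y = z • y := funext fun i => by
      simpa [sub_mulVec, smul_mulVec] using congrFun hMv (Sum.inr i)
    have hy : y = (z - a) • x := by linear_combination (norm := module) h1
    subst hy
    refine ⟨x, fun hx => hv (by simp [hx]), ?_⟩
    linear_combination (norm := module) -h2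
  · rintro ⟨x, hx, hBx⟩
    refine ⟨Sum.elim x ((z - a) • x), fun h => hx ?_, ?_⟩
    · simpa using congrArg (· ∘ Sum.inl) h
    · ext (i | i)
      · simp [smul_mulVec]
        ring
      · simp [sub_mulVec, smul_mulVec, hBx]
        ring

theorem map_nonsing_inv {L : Type*} [Field L] (f : K →+* L) (M : Matrix n n K) :
    M⁻¹.map f = (M.map f)⁻¹ := by
  ext i j
  simp only [inv_def, smul_apply, map_apply, smul_eq_mul, map_mul, Ring.inverse_eq_inv',
    map_inv₀, RingHom.map_det]
  exact congrArg _ (congrFun (congrFun (RingHom.map_adjugate f M) i) j)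

theorem spectrum_nonsing_inv {M : Matrix n n K} (hM : IsUnit M) :
    spectrum K M⁻¹ = (spectrum K M)⁻¹ := by
  obtain ⟨u, rfl⟩ := hM
  rw [← coe_units_inv, spectrum.map_inv]

end Field

theorem ofReal_mem_spectrum_map_iff (M : Matrix n n ℝ) (r : ℝ) :
    (r : ℂ) ∈ spectrum ℂ (M.map Complex.ofReal) ↔ r ∈ spectrum ℝ M := by
  rw [mem_spectrum_iff_isRoot_charpoly, mem_spectrum_iff_isRoot_charpoly,
    ← Complex.ofRealHom_eq_coe,
    ← Polynomial.isRoot_map_iff (f := Complex.ofRealHom) Complex.ofReal_injective,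
    ← charpoly_map]
  rfl

theorem IsHermitian.mem_spectrum_map_ofReal_iff {M : Matrix n n ℝ} (hM : M.IsHermitian)
    (z : ℂ) : z ∈ spectrum ℂ (M.map Complex.ofReal) ↔ ∃ r ∈ spectrum ℝ M, (r : ℂ) = z := by
  have hMc : (M.map Complex.ofReal).IsHermitian := hM.map _ fun _ => by simp
  constructor
  · intro hz
    obtain ⟨r, -, rfl⟩ := hMc.spectrum_eq_image_range ▸ hz
    exact ⟨r, (ofReal_mem_spectrum_map_iff M r).1 hz, rfl⟩
  · rintro ⟨r, hr, rfl⟩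
    exact (ofReal_mem_spectrum_map_iff M r).2 hr

theorem IsHermitian.spectrum_map_fromBlocks {B : Matrix n n ℝ} (hB : B.IsHermitian)
    (a b c : ℝ) :
    spectrum ℂ ((Matrix.fromBlocks (a • 1) (1 : Matrix n n ℝ) (b • 1 - B) (c • 1)).map
        Complex.ofReal) =
      {z : ℂ | ∃ r ∈ spectrum ℝ B, (z - a) * (z - c) + r = b} := by
  have hmap : (Matrix.fromBlocks (a • 1) (1 : Matrix n n ℝ) (b • 1 - B) (c • 1)).map
        Complex.ofReal =
      Matrix.fromBlocks ((a : ℂ) • 1) 1 ((b : ℂ) • 1 - B.map Complex.ofReal) ((c : ℂ) • 1) := by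
    ext (i | i) (j | j) <;> by_cases h : i = j <;> simp [h]
  ext z
  rw [hmap, mem_spectrum_fromBlocks_smul_one_iff, hB.mem_spectrum_map_ofReal_iff]
  simp only [Set.mem_ofPred_eq, eq_sub_iff_add_eq']

theorem IsHermitian.spectrum_map_fromBlocks_of_add_eq_of_mul_eq {B : Matrix n n ℝ}
    (hB : B.IsHermitian) {a b c : ℝ} (hac : a + c = -2) (hb : a * c = b) :
    spectrum ℂ ((Matrix.fromBlocks (a • 1) (1 : Matrix n n ℝ) (b • 1 - B) (c • 1)).map
        Complex.ofReal) =
      {z : ℂ | ∃ r ∈ spectrum ℝ B, z ^ 2 + 2 * z + r = 0} := by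
  rw [hB.spectrum_map_fromBlocks]
  ext z
  refine exists_congr fun r => and_congr_right fun _ => ?_
  have hac' : (a : ℂ) + c = -2 := by exact_mod_cast hac
  have hb' : (a : ℂ) * c = b := by exact_mod_cast hb
  constructor <;> intro h
  · linear_combination h + z * hac' - hb'
  · linear_combination h - z * hac' + hb'

end Matrix

theorem Complex.re_eq_neg_one_and_norm_eq_sqrt {b : ℝ} (hb : 1 ≤ b) {z : ℂ}
    (hz : z ^ 2 + 2 * z + b = 0) : z.re = -1 ∧ ‖z‖ = √b := by
  have hre : (z.re + 1) ^ 2 - z.im ^ 2 = 1 - b := by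
    have := congrArg Complex.re hz
    simp [pow_two] at this
    linarith
  have him : (z.re + 1) * z.im = 0 := by
    have := congrArg Complex.im hz
    simp [pow_two] at this
    linarith
  have hre1 : z.re = -1 := by
    rcases mul_eq_zero.mp him with h | h
    · linarith
    · nlinarith [sq_nonneg (z.re + 1)]
  refine ⟨hre1, ?_⟩
  rw [Complex.norm_def, Complex.normSq_apply, hre1]
  congr 1
  rw [hre1] at hre
  nlinarith

theorem Complex.exists_sq_add_two_mul_add_eq_zero (b : ℂ) :
    ∃ z : ℂ, z ^ 2 + 2 * z + b = 0 := by
  obtain ⟨w, hw⟩ := IsAlgClosed.exists_pow_nat_eq (1 - b) two_pos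
  exact ⟨w - 1, by linear_combination hw⟩

theorem specRad_eq_of_forall_norm_le {n : Type*} [Fintype n] [DecidableEq n]
    {M : Matrix n n ℝ} {r : ℝ} (hle : ∀ z ∈ spectrum ℂ (M.map Complex.ofReal), ‖z‖ ≤ r)
    (hmem : ∃ z ∈ spectrum ℂ (M.map Complex.ofReal), ‖z‖ = r) : specRad M = r := by
  refine IsGreatest.csSup_eq ⟨?_, ?_⟩
  · obtain ⟨z, hz, rfl⟩ := hmem
    exact ⟨z, hz, rfl⟩
  · rintro _ ⟨z, hz, rfl⟩
    exact hle z hz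

section QuadraticSpectrum

variable {n : Type*} [Fintype n] [DecidableEq n] {G : Matrix n n ℝ} {S : Set ℝ}

theorem re_neg_of_spectrum_eq (hS : ∀ b ∈ S, 1 ≤ b)
    (hG : spectrum ℂ (G.map Complex.ofReal) = {z : ℂ | ∃ b ∈ S, z ^ 2 + 2 * z + b = 0}) :
    ∀ z ∈ spectrum ℂ (G.map Complex.ofReal), z.re < 0 := by
  rw [hG]
  rintro z ⟨b, hb, hz⟩
  rw [(Complex.re_eq_neg_one_and_norm_eq_sqrt (hS b hb) hz).1]
  norm_num

theorem specRad_eq_sqrt_of_spectrum_eq {κ : ℝ} (hS : ∀ b ∈ S, 1 ≤ b ∧ b ≤ κ) (hκ : κ ∈ S)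
    (hG : spectrum ℂ (G.map Complex.ofReal) = {z : ℂ | ∃ b ∈ S, z ^ 2 + 2 * z + b = 0}) :
    specRad G = √κ := by
  refine specRad_eq_of_forall_norm_le ?_ ?_ <;> rw [hG]
  · rintro z ⟨b, hb, hz⟩
    rw [(Complex.re_eq_neg_one_and_norm_eq_sqrt (hS b hb).1 hz).2]
    exact Real.sqrt_le_sqrt (hS b hb).2
  · obtain ⟨z, hz⟩ := Complex.exists_sq_add_two_mul_add_eq_zero κ
    exact ⟨z, ⟨κ, hκ, hz⟩, (Complex.re_eq_neg_one_and_norm_eq_sqrt (hS κ hκ).1 hz).2⟩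

theorem specRad_inv_eq_one_of_spectrum_eq (hS : ∀ b ∈ S, 1 ≤ b) (h1 : 1 ∈ S)
    (hG : spectrum ℂ (G.map Complex.ofReal) = {z : ℂ | ∃ b ∈ S, z ^ 2 + 2 * z + b = 0}) :
    specRad G⁻¹ = 1 := by
  have h0 : (0 : ℂ) ∉ spectrum ℂ (G.map Complex.ofReal) := by
    rw [hG]
    rintro ⟨b, hb, hz⟩
    have : b = 0 := by exact_mod_cast (by linear_combination hz : (b : ℂ) = 0)
    linarith [hS b hb]
  have hinv : spectrum ℂ (G⁻¹.map Complex.ofReal) = (spectrum ℂ (G.map Complex.ofReal))⁻¹ :=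
    Matrix.map_nonsing_inv Complex.ofRealHom G ▸
      Matrix.spectrum_nonsing_inv ((spectrum.zero_notMem_iff ℂ).1 h0)
  refine specRad_eq_of_forall_norm_le ?_ ?_ <;> rw [hinv, hG]
  · rintro w ⟨b, hb, hw⟩
    have hnorm := (Complex.re_eq_neg_one_and_norm_eq_sqrt (hS b hb) hw).2
    rw [norm_inv] at hnorm
    rw [← inv_inv ‖w‖, hnorm]
    exact inv_le_one_of_one_le₀ (Real.one_le_sqrt.2 (hS b hb))
  · exact ⟨-1, ⟨1, h1, by norm_num⟩, by simp⟩

theorem condNumber_eq_sqrt_of_spectrum_eq {κ : ℝ} (hS : ∀ b ∈ S, 1 ≤ b ∧ b ≤ κ) (h1 : 1 ∈ S)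
    (hκ : κ ∈ S)
    (hG : spectrum ℂ (G.map Complex.ofReal) = {z : ℂ | ∃ b ∈ S, z ^ 2 + 2 * z + b = 0}) :
    condNumber G = √κ := by
  rw [condNumber, specRad_inv_eq_one_of_spectrum_eq (fun b hb => (hS b hb).1) h1 hG,
    specRad_eq_sqrt_of_spectrum_eq hS hκ hG, one_mul]

end QuadraticSpectrum

theorem stmt0_general {d : ℕ} (A : Matrix (Fin d) (Fin d) ℝ) (μ L : ℝ)
    (hA : A.IsSymm)
    (hμspec : μ ∈ spectrum ℝ A) (hLspec : L ∈ spectrum ℝ A)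
    (hbound : ∀ lam ∈ spectrum ℝ A, μ ≤ lam ∧ lam ≤ L)
    (hμpos : 0 < μ)
    (GHB GNAG : Matrix (Fin d ⊕ Fin d) (Fin d ⊕ Fin d) ℝ)
    (hGHB : GHB = Matrix.fromBlocks 0 1 (-(μ⁻¹ • A)) (-2))
    (hGNAG : GNAG = Matrix.fromBlocks (-1) 1 (1 - μ⁻¹ • A) (-1)) :
    (∀ z ∈ spectrum ℂ (GHB.map Complex.ofReal), z.re < 0) ∧
    (∀ z ∈ spectrum ℂ (GNAG.map Complex.ofReal), z.re < 0) ∧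
    condNumber GHB = Real.sqrt (L / μ) ∧
    condNumber GNAG = Real.sqrt (L / μ) := by
  set B := μ⁻¹ • A
  have hB : B.IsHermitian :=
    IsHermitian.smul ((conjTranspose_eq_transpose_of_trivial A).trans hA) (IsSelfAdjoint.all _)
  have hspecB : spectrum ℝ B = μ⁻¹ • spectrum ℝ A :=
    spectrum.unit_smul_eq_smul A (Units.mk0 μ⁻¹ (inv_ne_zero hμpos.ne'))
  have hS : ∀ b ∈ spectrum ℝ B, 1 ≤ b ∧ b ≤ L / μ := by
    rw [hspecB]
    rintro _ ⟨lam, hlam, rfl⟩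
    simp only [smul_eq_mul, ← div_eq_inv_mul]
    exact ⟨(one_le_div hμpos).2 (hbound lam hlam).1,
      div_le_div_of_nonneg_right (hbound lam hlam).2 hμpos.le⟩
  have h1 : 1 ∈ spectrum ℝ B := hspecB ▸ ⟨μ, hμspec, inv_mul_cancel₀ hμpos.ne'⟩
  have hκ : L / μ ∈ spectrum ℝ B := hspecB ▸ ⟨L, hLspec, (div_eq_inv_mul L μ).symm⟩
  have hspecHB := hB.spectrum_map_fromBlocks_of_add_eq_of_mul_eq (a := 0) (b := 0) (c := -2)
    (by norm_num) (by norm_num)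
  have hspecNAG := hB.spectrum_map_fromBlocks_of_add_eq_of_mul_eq (a := -1) (b := 1) (c := -1)
    (by norm_num) (by norm_num)
  rw [show fromBlocks ((0 : ℝ) • 1) 1 ((0 : ℝ) • 1 - B) ((-2 : ℝ) • 1) = GHB by
    rw [hGHB]; simp [two_smul, one_add_one_eq_two]] at hspecHB
  rw [show fromBlocks ((-1 : ℝ) • 1) 1 ((1 : ℝ) • 1 - B) ((-1 : ℝ) • 1) = GNAG by
    rw [hGNAG]; simp] at hspecNAG
  exact ⟨re_neg_of_spectrum_eq (fun b hb => (hS b hb).1) hspecHB,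
    re_neg_of_spectrum_eq (fun b hb => (hS b hb).1) hspecNAG,
    condNumber_eq_sqrt_of_spectrum_eq hS h1 hκ hspecHB,
    condNumber_eq_sqrt_of_spectrum_eq hS h1 hκ hspecNAG⟩

theorem stmt0 {d : ℕ} (A : Matrix (Fin d) (Fin d) ℝ) (μ L : ℝ)
    (hA : A.IsSymm) (hApd : A.PosDef)
    (hμspec : μ ∈ spectrum ℝ A) (hLspec : L ∈ spectrum ℝ A)
    (hbound : ∀ lam ∈ spectrum ℝ A, μ ≤ lam ∧ lam ≤ L)
    (hμpos : 0 < μ)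
    (GHB GNAG : Matrix (Fin d ⊕ Fin d) (Fin d ⊕ Fin d) ℝ)
    (hGHB : GHB = Matrix.fromBlocks 0 1 (-(μ⁻¹ • A)) (-2))
    (hGNAG : GNAG = Matrix.fromBlocks (-1) 1 (1 - μ⁻¹ • A) (-1)) :
    (∀ z ∈ spectrum ℂ (GHB.map Complex.ofReal), z.re < 0) ∧
    (∀ z ∈ spectrum ℂ (GNAG.map Complex.ofReal), z.re < 0) ∧
    condNumber GHB = Real.sqrt (L / μ) ∧
    condNumber GNAG = Real.sqrt (L / μ) :=
  stmt0_general A μ L hA hμspec hLspec hbound hμpos GHB GNAG hGHB hGNAG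
end

section
/- Let A be a d×d real symmetric positive definite matrix with smallest eigenvalue μ > 0, largest eigenvalue L, and κ(A) = L/μ. For G = G_HB = [[0, I], [−A/μ, −2I]] take the splitting M = [[0, 0], [−A/μ, −2I]], N = [[0, I], [0, 0]]; for G = G_NAG = [[−I, I], [I − A/μ, −I]] take M = [[−I, 0], [I − A/μ, −I]], N = [[0, I], [0, 0]]. For step size α > 0 define the Gauss–Seidel iteration matrix E(α, G) = (I − αM)⁻¹(I + αN). If 0 < α ≤ 2/√(κ(A)), then the spectral radius satisfies ρ(E(α, G)) ≤ 1/√(1 + 2α); in particular, for α = 2/√(κ(A)) one has ρ(E(α, G)) ≤ 1/(1 + 1/√(κ(A))). -/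
open Matrix

/-!
An eigenvalue `z` of `(I - αM)⁻¹ (I + αN)` is a root of `det (z (I - αM) - (I + αN))`. Both
matrices are block triangular with scalar diagonal blocks, so eliminating the second half of an
eigenvector leaves an eigenvector of `A`, whose eigenvalue `r ∈ [μ, L]` is real since `A` is
symmetric. Then `z` is a root of a real quadratic `p z² + q z + 1` with `p = 1 + 2α` (heavy ball)
or `p = (1 + α)²` (Nesterov), and `α² L / μ ≤ 4` makes its discriminant nonpositive, so
`|z|² = 1 / p ≤ 1 / (1 + 2α)`.
-/

theorem Complex.norm_sq_eq_inv_of_quadratic {p q : ℝ} {z : ℂ} (hp : 0 < p) (hq : q ^ 2 ≤ 4 * p)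
    (hz : p * z ^ 2 + q * z + 1 = 0) : ‖z‖ ^ 2 = p⁻¹ := by
  have hre := congrArg Complex.re hz
  have him := congrArg Complex.im hz
  simp only [sq, Complex.add_re, Complex.mul_re, Complex.ofReal_re, Complex.ofReal_im,
    Complex.one_re, Complex.zero_re, Complex.add_im, Complex.mul_im, Complex.one_im,
    Complex.zero_im, zero_mul, sub_zero, add_zero] at hre him
  have hvertex : 2 * p * z.re + q = 0 := by
    rcases mul_eq_zero.mp (show z.im * (2 * p * z.re + q) = 0 by linarith) with h | h
    · rw [h] at hre
      nlinarith [sq_nonneg (2 * p * z.re + q)]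
    · exact h
  rw [Complex.sq_norm, Complex.normSq_apply]
  refine eq_inv_of_mul_eq_one_left ?_
  rw [show q = -(2 * p * z.re) by linarith] at hre
  linear_combination -hre

theorem specRad_le_inv_sqrt_of_quadratic {n : Type*} [Fintype n] [DecidableEq n]
    (M : Matrix n n ℝ) {p : ℝ} (hp : 0 < p)
    (h : ∀ z ∈ spectrum ℂ (M.map Complex.ofReal),
      ∃ q : ℝ, q ^ 2 ≤ 4 * p ∧ p * z ^ 2 + q * z + 1 = 0) :
    specRad M ≤ 1 / √p := by
  refine Real.sSup_le ?_ (by positivity)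
  rintro _ ⟨z, hz, rfl⟩
  obtain ⟨q, hq, hzq⟩ := h z hz
  rw [← Real.sqrt_sq (norm_nonneg z), Complex.norm_sq_eq_inv_of_quadratic hp hq hzq,
    Real.sqrt_inv, one_div]

theorem Matrix.exists_mulVec_eq_smul_mulVec_of_mem_spectrum {n R K : Type*} [Fintype n]
    [DecidableEq n] [CommRing R] [Field K] (f : R →+* K) {B C : Matrix n n R}
    (hB : IsUnit B.det) {z : K} (hz : z ∈ spectrum K ((B⁻¹ * C).map f)) :
    ∃ v ≠ 0, C.map f *ᵥ v = z • (B.map f *ᵥ v) := by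
  rw [← Matrix.spectrum_toLin', ← Module.End.hasEigenvalue_iff_mem_spectrum] at hz
  obtain ⟨v, hv⟩ := hz.exists_hasEigenvector
  rw [Module.End.hasEigenvector_iff, Module.End.mem_eigenspace_iff, Matrix.toLin'_apply] at hv
  refine ⟨v, hv.2, ?_⟩
  have hC : C = B * (B⁻¹ * C) := by rw [← Matrix.mul_assoc, mul_nonsing_inv _ hB, Matrix.one_mul]
  rw [hC, Matrix.map_mul, ← Matrix.mulVec_mulVec, hv.1, Matrix.mulVec_smul]

theorem Matrix.IsSymm.exists_mem_spectrum_of_mulVec_eq_smul {n : Type*} [Fintype n] [DecidableEq n]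
    {A : Matrix n n ℝ} (hA : A.IsSymm) {x : n → ℂ} (hx : x ≠ 0) {c : ℂ}
    (h : A.map Complex.ofReal *ᵥ x = c • x) : ∃ r ∈ spectrum ℝ A, (r : ℂ) = c := by
  have hA' : (A.map Complex.ofReal).IsHermitian :=
    (isHermitian_iff_isSymm.mpr hA).map _ fun r => (Complex.conj_ofReal r).symm
  have hc : c ∈ spectrum ℂ (A.map Complex.ofReal) := by
    rw [← Matrix.spectrum_toLin']
    exact (Module.End.hasEigenvalue_of_hasEigenvector
      (Module.End.hasEigenvector_iff.mpr ⟨by simpa using h, hx⟩)).mem_spectrum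
  rw [hA'.spectrum_eq_image_range] at hc
  obtain ⟨_, ⟨i, rfl⟩, rfl⟩ := hc
  exact ⟨_, AlgHom.spectrum_apply_subset (AlgHom.mapMatrix (Algebra.ofId ℝ ℂ)) A
    (hA'.eigenvalues_mem_spectrum_real i), rfl⟩

theorem Matrix.IsSymm.exists_mem_spectrum_of_blockTriangular_pencil {n : Type*} [Fintype n]
    [DecidableEq n] {A : Matrix n n ℝ} (hA : A.IsSymm) {u w a t α : ℝ} (hα : α ≠ 0) (ha : a ≠ 0)
    {z : ℂ} {v : n ⊕ n → ℂ} (hv : v ≠ 0)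
    (h : (Matrix.fromBlocks 1 (α • 1) 0 1 : Matrix (n ⊕ n) (n ⊕ n) ℝ).map Complex.ofReal *ᵥ v =
      z • ((Matrix.fromBlocks (u • 1) 0 (a • A - t • 1) (w • 1)).map Complex.ofReal *ᵥ v)) :
    ∃ r ∈ spectrum ℝ A, z * α * (a * r - t) = (1 - z * w) * (z * u - 1) := by
  obtain ⟨x, y, rfl⟩ : ∃ x y, v = Sum.elim x y :=
    ⟨v ∘ Sum.inl, v ∘ Sum.inr, (Sum.elim_comp_inl_inr v).symm⟩
  have h1 := fun i => congrFun h (Sum.inl i)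
  have h2 := fun i => congrFun h (Sum.inr i)
  simp only [fromBlocks_map, Complex.ofReal_zero, Complex.ofReal_one, Matrix.map_one, smul_eq_mul,
    Complex.ofReal_mul, Complex.real_smul, implies_true, Matrix.map_smul, Matrix.map_zero,
    fromBlocks_mulVec, one_mulVec, smul_mulVec, zero_mulVec, zero_add, Sum.elim_inl, Pi.add_apply,
    Pi.smul_apply, Complex.ofReal_sub, Matrix.map_sub, add_zero, sub_mulVec,
    Sum.elim_inr, Pi.sub_apply, Sum.elim_comp_inl, Sum.elim_comp_inr] at h1 h2
  have hα' : (α : ℂ) ≠ 0 := mod_cast hα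
  have ha' : (a : ℂ) ≠ 0 := mod_cast ha
  have hz : z ≠ 0 := by
    rintro rfl
    have hy : y = 0 := funext fun i => by simpa using h2 i
    have hx : x = 0 := funext fun i => by simpa [hy] using h1 i
    exact hv (by rw [hx, hy, Sum.elim_zero_zero])
  have hx : x ≠ 0 := by
    intro hx
    have hy : y = 0 := funext fun i => by simpa [hx, hα'] using h1 i
    exact hv (by rw [hx, hy, Sum.elim_zero_zero])
  have hAx : A.map Complex.ofReal *ᵥ x =
      (((1 - z * w) * (z * u - 1) + z * α * t) / (z * α * a)) • x := by
    funext i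
    rw [Pi.smul_apply, smul_eq_mul, div_mul_eq_mul_div, eq_div_iff (by simp [hz, hα', ha'])]
    linear_combination (1 - z * w) * h1 i - α * h2 i
  obtain ⟨r, hr, hrc⟩ := hA.exists_mem_spectrum_of_mulVec_eq_smul hx hAx
  refine ⟨r, hr, ?_⟩
  rw [hrc]
  field_simp
  ring

theorem specRad_blockTriangular_gaussSeidel_le {n : Type*} [Fintype n] [DecidableEq n]
    {A : Matrix n n ℝ} (hA : A.IsSymm) {u w a t α : ℝ} (hα : α ≠ 0) (ha : a ≠ 0) (huw : 0 < u * w)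
    (hdisc : ∀ r ∈ spectrum ℝ A, (α * (a * r - t) - (u + w)) ^ 2 ≤ 4 * (u * w)) :
    specRad ((fromBlocks (u • 1) 0 (a • A - t • 1) (w • 1))⁻¹ * fromBlocks 1 (α • 1) 0 1) ≤
      1 / √(u * w) := by
  refine specRad_le_inv_sqrt_of_quadratic _ huw fun z hz => ?_
  have hdet : IsUnit (fromBlocks (u • 1) 0 (a • A - t • 1) (w • 1)).det := by
    rw [det_fromBlocks_zero₁₂, det_smul, det_smul, det_one, mul_one, mul_one, ← mul_pow]
    simp [huw.ne']
  obtain ⟨v, hv, hzv⟩ := exists_mulVec_eq_smul_mulVec_of_mem_spectrum Complex.ofRealHom hdet hz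
  obtain ⟨r, hr, hzr⟩ := hA.exists_mem_spectrum_of_blockTriangular_pencil hα ha hv hzv
  exact ⟨_, hdisc r hr, by push_cast; linear_combination hzr⟩

theorem heavyBall_discriminant_le {α β : ℝ} (hα : 0 < α) (hβ : α ^ 2 ≤ β) (hβ4 : β ≤ 4) :
    (β - 2 - 2 * α) ^ 2 ≤ 4 * (1 + 2 * α) := by
  have hα2 : α ≤ 2 := by nlinarith
  nlinarith [mul_nonneg (sub_nonneg.2 hβ) (sub_nonneg.2 hβ4),
    mul_nonneg (mul_nonneg hα.le (by linarith : (0 : ℝ) ≤ 4 - α)) (hβ.trans' (sq_nonneg α))]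

theorem nesterov_discriminant_le {α β : ℝ} (hα : 0 < α) (hβ : α ^ 2 ≤ β) (hβ4 : β ≤ 4) :
    (β - α ^ 2 - 2 - 2 * α) ^ 2 ≤ 4 * (1 + α) ^ 2 := by
  have : (β - α ^ 2 - 2 - 2 * α) ^ 2 ≤ (2 * (1 + α)) ^ 2 := sq_le_sq' (by linarith) (by nlinarith)
  linarith

section Splittings

variable {n : Type*} [DecidableEq n] (A : Matrix n n ℝ) (μ α : ℝ)

theorem one_sub_smul_fromBlocks_heavyBall :
    (1 : Matrix (n ⊕ n) (n ⊕ n) ℝ) - α • fromBlocks 0 0 (-(μ⁻¹ • A)) (-2) =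
      fromBlocks ((1 : ℝ) • 1) 0 ((α / μ) • A - (0 : ℝ) • 1) ((1 + 2 * α) • 1) := by
  rw [← one_add_one_eq_two (R := Matrix n n ℝ), sub_eq_add_neg, ← fromBlocks_one, fromBlocks_smul,
    fromBlocks_neg, fromBlocks_add]
  congr 1 <;> module

theorem one_sub_smul_fromBlocks_nesterov :
    (1 : Matrix (n ⊕ n) (n ⊕ n) ℝ) - α • fromBlocks (-1) 0 (1 - μ⁻¹ • A) (-1) =
      fromBlocks ((1 + α) • 1) 0 ((α / μ) • A - α • 1) ((1 + α) • 1) := by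
  rw [sub_eq_add_neg, ← fromBlocks_one, fromBlocks_smul, fromBlocks_neg, fromBlocks_add]
  congr 1 <;> module

theorem one_add_smul_fromBlocks_zero_one_zero_zero :
    (1 : Matrix (n ⊕ n) (n ⊕ n) ℝ) + α • fromBlocks 0 1 0 0 = fromBlocks 1 (α • 1) 0 1 := by
  rw [← fromBlocks_one, fromBlocks_smul, fromBlocks_add]
  simp

variable [Fintype n] {A μ α}

theorem specRad_heavyBall_le (hA : A.IsSymm) (hμ : 0 < μ) (hα : 0 < α)
    (hspec : ∀ r ∈ spectrum ℝ A, 1 ≤ r / μ ∧ α ^ 2 * (r / μ) ≤ 4) :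
    specRad ((1 - α • fromBlocks 0 0 (-(μ⁻¹ • A)) (-2))⁻¹ * (1 + α • fromBlocks 0 1 0 0)) ≤
      1 / √(1 + 2 * α) := by
  rw [one_sub_smul_fromBlocks_heavyBall, one_add_smul_fromBlocks_zero_one_zero_zero]
  calc _ ≤ 1 / √(1 * (1 + 2 * α)) :=
        specRad_blockTriangular_gaussSeidel_le hA hα.ne' (div_pos hα hμ).ne' (by positivity)
          fun r hr => ?_
    _ = 1 / √(1 + 2 * α) := by rw [one_mul]
  obtain ⟨h1, h4⟩ := hspec r hr
  convert heavyBall_discriminant_le hα (le_mul_of_one_le_right (sq_nonneg α) h1) h4 using 1 <;> ring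

theorem specRad_nesterov_le (hA : A.IsSymm) (hμ : 0 < μ) (hα : 0 < α)
    (hspec : ∀ r ∈ spectrum ℝ A, 1 ≤ r / μ ∧ α ^ 2 * (r / μ) ≤ 4) :
    specRad ((1 - α • fromBlocks (-1) 0 (1 - μ⁻¹ • A) (-1))⁻¹ * (1 + α • fromBlocks 0 1 0 0)) ≤
      1 / √(1 + 2 * α) := by
  rw [one_sub_smul_fromBlocks_nesterov, one_add_smul_fromBlocks_zero_one_zero_zero]
  calc _ ≤ 1 / √((1 + α) * (1 + α)) :=
        specRad_blockTriangular_gaussSeidel_le hA hα.ne' (div_pos hα hμ).ne' (by positivity)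
          fun r hr => ?_
    _ ≤ 1 / √(1 + 2 * α) := by
        gcongr
        nlinarith
  obtain ⟨h1, h4⟩ := hspec r hr
  convert nesterov_discriminant_le hα (le_mul_of_one_le_right (sq_nonneg α) h1) h4 using 1 <;> ring

end Splittings

theorem sq_mul_le_four_of_le_two_div_sqrt {α κ : ℝ} (hα : 0 ≤ α) (hκ : 0 < κ)
    (h : α ≤ 2 / √κ) : α ^ 2 * κ ≤ 4 := by
  rw [le_div_iff₀ (Real.sqrt_pos.2 hκ)] at h
  calc α ^ 2 * κ = (α * √κ) ^ 2 := by rw [mul_pow, Real.sq_sqrt hκ.le]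
    _ ≤ 2 ^ 2 := by gcongr
    _ = 4 := by norm_num

theorem one_add_one_div_le_sqrt_one_add_four_div {s : ℝ} (hs : 1 ≤ s) :
    1 + 1 / s ≤ √(1 + 2 * (2 / s)) := by
  have hx : 1 / s ≤ 1 := (div_le_one (by linarith)).2 hs
  have hx0 : 0 < 1 / s := by positivity
  rw [Real.le_sqrt' (by positivity), show 2 / s = 2 * (1 / s) by ring]
  nlinarith

theorem stmt1_general {d : ℕ} (A : Matrix (Fin d) (Fin d) ℝ) (μ L α : ℝ)
    (hA : A.IsSymm)
    (hμspec : μ ∈ spectrum ℝ A)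
    (hbound : ∀ lam ∈ spectrum ℝ A, μ ≤ lam ∧ lam ≤ L)
    (hμpos : 0 < μ)
    (MHB NHB MNAG NNAG : Matrix (Fin d ⊕ Fin d) (Fin d ⊕ Fin d) ℝ)
    (hMHB : MHB = Matrix.fromBlocks 0 0 (-(μ⁻¹ • A)) (-2))
    (hNHB : NHB = Matrix.fromBlocks 0 1 0 0)
    (hMNAG : MNAG = Matrix.fromBlocks (-1) 0 (1 - μ⁻¹ • A) (-1))
    (hNNAG : NNAG = Matrix.fromBlocks 0 1 0 0)
    (hα0 : 0 < α) (hα2 : α ≤ 2 / Real.sqrt (L / μ)) :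
    specRad ((1 - α • MHB)⁻¹ * (1 + α • NHB)) ≤ 1 / Real.sqrt (1 + 2 * α) ∧
    specRad ((1 - α • MNAG)⁻¹ * (1 + α • NNAG)) ≤ 1 / Real.sqrt (1 + 2 * α) ∧
    (α = 2 / Real.sqrt (L / μ) →
      specRad ((1 - α • MHB)⁻¹ * (1 + α • NHB)) ≤ 1 / (1 + 1 / Real.sqrt (L / μ)) ∧
      specRad ((1 - α • MNAG)⁻¹ * (1 + α • NNAG)) ≤ 1 / (1 + 1 / Real.sqrt (L / μ))) := by
  have hκ : 1 ≤ L / μ := (one_le_div hμpos).2 (hbound μ hμspec).2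
  have hα4 : α ^ 2 * (L / μ) ≤ 4 := sq_mul_le_four_of_le_two_div_sqrt hα0.le (by linarith) hα2
  have hspec : ∀ r ∈ spectrum ℝ A, 1 ≤ r / μ ∧ α ^ 2 * (r / μ) ≤ 4 := fun r hr =>
    ⟨(one_le_div hμpos).2 (hbound r hr).1, hα4.trans' (by gcongr; exact (hbound r hr).2)⟩
  subst hMHB hNHB hMNAG hNNAG
  have hHB := specRad_heavyBall_le hA hμpos hα0 hspec
  have hNAG := specRad_nesterov_le hA hμpos hα0 hspec
  refine ⟨hHB, hNAG, fun hαeq => ?_⟩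
  have hrate : 1 / √(1 + 2 * α) ≤ 1 / (1 + 1 / √(L / μ)) := by
    rw [hαeq]
    exact one_div_le_one_div_of_le (by positivity)
      (one_add_one_div_le_sqrt_one_add_four_div (Real.one_le_sqrt.2 hκ))
  exact ⟨hHB.trans hrate, hNAG.trans hrate⟩

theorem stmt1 {d : ℕ} (A : Matrix (Fin d) (Fin d) ℝ) (μ L α : ℝ)
    (hA : A.IsSymm) (hApd : A.PosDef)
    (hμspec : μ ∈ spectrum ℝ A) (hLspec : L ∈ spectrum ℝ A)
    (hbound : ∀ lam ∈ spectrum ℝ A, μ ≤ lam ∧ lam ≤ L)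
    (hμpos : 0 < μ)
    (MHB NHB MNAG NNAG : Matrix (Fin d ⊕ Fin d) (Fin d ⊕ Fin d) ℝ)
    (hMHB : MHB = Matrix.fromBlocks 0 0 (-(μ⁻¹ • A)) (-2))
    (hNHB : NHB = Matrix.fromBlocks 0 1 0 0)
    (hMNAG : MNAG = Matrix.fromBlocks (-1) 0 (1 - μ⁻¹ • A) (-1))
    (hNNAG : NNAG = Matrix.fromBlocks 0 1 0 0)
    (hα0 : 0 < α) (hα2 : α ≤ 2 / Real.sqrt (L / μ)) :
    specRad ((1 - α • MHB)⁻¹ * (1 + α • NHB)) ≤ 1 / Real.sqrt (1 + 2 * α) ∧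
    specRad ((1 - α • MNAG)⁻¹ * (1 + α • NNAG)) ≤ 1 / Real.sqrt (1 + 2 * α) ∧
    (α = 2 / Real.sqrt (L / μ) →
      specRad ((1 - α • MHB)⁻¹ * (1 + α • NHB)) ≤ 1 / (1 + 1 / Real.sqrt (L / μ)) ∧
      specRad ((1 - α • MNAG)⁻¹ * (1 + α • NNAG)) ≤ 1 / (1 + 1 / Real.sqrt (L / μ))) :=
  stmt1_general A μ L α hA hμspec hbound hμpos MHB NHB MNAG NNAG hMHB hNHB hMNAG hNNAG hα0 hα2
end

section
/- Let A be a d×d real symmetric positive semidefinite matrix with largest eigenvalue L > 0. Let γ_0 > 0 and for each k ≥ 0 let α_k > 0 and γ_{k+1} > 0 satisfy γ_{k+1}(1 + α_k) = γ_k and L·α_k² = γ_{k+1}. For γ > 0 set G(γ) = [[−I, I], [−A/γ, 0]], with Gauss–Seidel splitting M(γ) = [[−I, 0], [−A/γ, 0]], N = [[0, I], [0, 0]], and E(α, G(γ)) = (I − αM(γ))⁻¹(I + αN). Define the rescaled matrix Ẽ_k = diag(I, γ_{k+1}·I) · E(α_k, G(γ_{k+1})) · diag(I, γ_k·I)⁻¹.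 Then the spectral radius satisfies ρ(Ẽ_k) = γ_{k+1}/γ_k = 1/(1 + α_k). -/
/-!
Conjugating by the block-diagonal scalings turns `Ẽ_k` into
`[[c I, k₁ I], [k₂ A, c I + k₃ A]]` with `c = 1 / (1 + α_k)` and `k₁ k₂ = k₃ c`. On an eigenvector
of `A` with eigenvalue `μ` this acts as a `2 × 2` matrix of determinant `c²` and trace `2c + k₃ μ`.
Since `0 ≤ μ ≤ L` and `L α_k² = γ_{k+1}`, the trace lies in `[2c - c², 2c]`, so the discriminant
is nonpositive and every eigenvalue has modulus exactly `c`.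
-/

open Matrix

theorem Complex.normSq_eq_of_sq_sub_mul_add_eq_zero {t p : ℝ} (hdisc : t ^ 2 ≤ 4 * p) {z : ℂ}
    (hz : z ^ 2 - t * z + p = 0) : Complex.normSq z = p := by
  have hre := congrArg Complex.re hz
  have him := congrArg Complex.im hz
  simp only [sq, Complex.add_re, Complex.sub_re, Complex.mul_re, Complex.ofReal_re,
    Complex.ofReal_im, Complex.add_im, Complex.sub_im, Complex.mul_im, Complex.zero_re,
    Complex.zero_im] at hre him
  rw [Complex.normSq_apply]
  rcases eq_or_ne z.im 0 with hy | hy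
  · rw [hy] at hre ⊢
    nlinarith [sq_nonneg (2 * z.re - t)]
  · have hx : 2 * z.re = t := by
      apply mul_right_cancel₀ hy; linarith
    linear_combination -hre + z.re * hx

section

variable {K n : Type*} [Field K] [Fintype n] [DecidableEq n]

theorem Matrix.mem_spectrum_iff_exists_mulVec_eq_smul_s2 {M : Matrix n n K} {μ : K} :
    μ ∈ spectrum K M ↔ ∃ v ≠ 0, M *ᵥ v = μ • v := by
  rw [spectrum.mem_iff, isUnit_iff_isUnit_det, isUnit_iff_ne_zero, not_not,
    ← exists_mulVec_eq_zero_iff]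
  simp [sub_mulVec, algebraMap_eq_diagonal, mulVec_diagonal, sub_eq_zero, eq_comm, funext_iff]

theorem Matrix.ofReal_mem_spectrum_map_iff_s2 (A : Matrix n n ℝ) (μ : ℝ) :
    (μ : ℂ) ∈ spectrum ℂ (A.map Complex.ofReal) ↔ μ ∈ spectrum ℝ A := by
  rw [mem_spectrum_iff_isRoot_charpoly, mem_spectrum_iff_isRoot_charpoly,
    ← Polynomial.isRoot_map_iff Complex.ofRealHom.injective (p := A.charpoly), ← charpoly_map]
  rfl

theorem Matrix.IsHermitian.exists_ofReal_of_mem_spectrum_map {A : Matrix n n ℝ}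
    (hA : A.IsHermitian) {z : ℂ} (hz : z ∈ spectrum ℂ (A.map Complex.ofReal)) :
    ∃ μ ∈ spectrum ℝ A, z = μ := by
  have hB : (A.map Complex.ofReal).IsHermitian := hA.map _ fun _ ↦ (Complex.conj_ofReal _).symm
  obtain ⟨μ, -, rfl⟩ := hB.spectrum_eq_image_range ▸ hz
  exact ⟨μ, (ofReal_mem_spectrum_map_iff_s2 A μ).1 hz, rfl⟩

theorem Matrix.PosSemidef.nonneg_of_mem_spectrum {A : Matrix n n ℝ} (hA : A.PosSemidef) {μ : ℝ}
    (hμ : μ ∈ spectrum ℝ A) : 0 ≤ μ :=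
  (posSemidef_iff_isHermitian_and_spectrum_nonneg.1 hA).2 hμ

theorem Matrix.exists_mem_spectrum_of_mem_spectrum_fromBlocks {B : Matrix n n K} {c k₁ k₂ k₃ z : K}
    (hz : z ∈ spectrum K (fromBlocks (c • 1) (k₁ • (1 : Matrix n n K)) (k₂ • B) (c • 1 + k₃ • B)))
    (hzc : z ≠ c) :
    ∃ μ ∈ spectrum K B, (z - c) ^ 2 = μ * (k₁ * k₂ + k₃ * (z - c)) := by
  obtain ⟨w, hw0, hw⟩ := mem_spectrum_iff_exists_mulVec_eq_smul_s2.1 hz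
  obtain ⟨u, v, rfl⟩ : ∃ u v, w = Sum.elim u v := ⟨_, _, (Sum.elim_comp_inl_inr w).symm⟩
  rw [fromBlocks_mulVec, Sum.elim_comp_inl, Sum.elim_comp_inr] at hw
  have hu : c • u + k₁ • v = z • u := by
    ext i; simpa [smul_mulVec] using congrFun hw (Sum.inl i)
  have hv : k₂ • B *ᵥ u + (c • v + k₃ • B *ᵥ v) = z • v := by
    ext i; simpa [add_mulVec, smul_mulVec] using congrFun hw (Sum.inr i)
  have hzc' : z - c ≠ 0 := sub_ne_zero.2 hzc
  have hu' : (z - c) • u = k₁ • v := by rw [sub_smul, ← hu]; abel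
  have hBv : (k₁ * k₂ + k₃ * (z - c)) • B *ᵥ v = (z - c) ^ 2 • v := by
    have hBu := congrArg (B *ᵥ ·) hu'
    simp only [mulVec_smul] at hBu
    linear_combination (norm := module) (z - c) • hv - k₂ • hBu
  have hv0 : v ≠ 0 := by
    rintro rfl
    rw [smul_zero, smul_eq_zero_iff_right hzc'] at hu'
    exact hw0 (by rw [hu', Sum.elim_zero_zero])
  have hs : k₁ * k₂ + k₃ * (z - c) ≠ 0 := by
    intro hs
    rw [hs, zero_smul, eq_comm, smul_eq_zero_iff_right (pow_ne_zero 2 hzc')] at hBv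
    exact hv0 hBv
  refine ⟨(z - c) ^ 2 / (k₁ * k₂ + k₃ * (z - c)),
    mem_spectrum_iff_exists_mulVec_eq_smul_s2.2 ⟨v, hv0, ?_⟩, (div_mul_cancel₀ _ hs).symm⟩
  rw [div_eq_inv_mul, mul_smul, ← hBv, smul_smul, inv_mul_cancel₀ hs, one_smul]

theorem Matrix.gaussSeidel_rescaled_eq_fromBlocks (A : Matrix n n K) {a g : K} (ha : 1 + a ≠ 0)
    (hg : g ≠ 0) :
    (fromBlocks 1 0 0 (g • 1) : Matrix (n ⊕ n) (n ⊕ n) K) *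
        ((1 - a • fromBlocks (-1) 0 (-(g⁻¹ • A)) 0)⁻¹ * (1 + a • fromBlocks 0 1 0 0)) *
        (fromBlocks 1 0 0 ((g * (1 + a)) • 1))⁻¹ =
      fromBlocks ((1 + a)⁻¹ • 1) ((a / (g * (1 + a) ^ 2)) • 1) ((-(a / (1 + a))) • A)
        ((1 + a)⁻¹ • 1 + (-(a ^ 2 / (g * (1 + a) ^ 2))) • A) := by
  have hinv₁ : ((1 : Matrix (n ⊕ n) (n ⊕ n) K) - a • fromBlocks (-1) 0 (-(g⁻¹ • A)) 0)⁻¹ =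
      fromBlocks ((1 + a)⁻¹ • 1) 0 ((-(a / (g * (1 + a)))) • A) 1 := by
    refine inv_eq_left_inv ?_
    simp only [← fromBlocks_one, fromBlocks_smul, sub_eq_add_neg, fromBlocks_neg, fromBlocks_add,
      fromBlocks_multiply]
    congr 1 <;> simp only [Matrix.mul_smul, Matrix.one_mul, Matrix.mul_one, Matrix.mul_zero,
      Matrix.zero_mul, Matrix.mul_add, Matrix.mul_neg] <;> match_scalars <;> field_simp
    ring
  have hinv₂ : (fromBlocks 1 0 0 ((g * (1 + a)) • 1) : Matrix (n ⊕ n) (n ⊕ n) K)⁻¹ =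
      fromBlocks 1 0 0 ((g * (1 + a))⁻¹ • 1) := by
    refine inv_eq_left_inv ?_
    simp only [← fromBlocks_one, fromBlocks_multiply]
    congr 1 <;> simp only [Matrix.mul_smul, Matrix.mul_one, Matrix.mul_zero] <;>
      match_scalars <;> field_simp
  rw [hinv₁, hinv₂]
  simp only [← fromBlocks_one, fromBlocks_smul, fromBlocks_add, fromBlocks_multiply]
  congr 1 <;> simp only [Matrix.smul_mul, Matrix.mul_smul, Matrix.one_mul, Matrix.mul_one,
      Matrix.mul_zero, Matrix.zero_mul, Matrix.mul_add] <;> match_scalars <;> field_simp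

theorem Matrix.norm_eq_of_mem_spectrum_map_fromBlocks {A : Matrix n n ℝ} (hA : A.PosSemidef)
    {L c k₁ k₂ k₃ : ℝ} (hL : ∀ μ ∈ spectrum ℝ A, μ ≤ L) (hc : 0 ≤ c) (hk : k₁ * k₂ = k₃ * c)
    (hk₃ : k₃ ≤ 0) (hk₃L : -(4 * c) ≤ k₃ * L) {z : ℂ}
    (hz : z ∈ spectrum ℂ
      ((fromBlocks (c • 1) (k₁ • (1 : Matrix n n ℝ)) (k₂ • A) (c • 1 + k₃ • A)).map
        Complex.ofReal)) :
    ‖z‖ = c := by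
  rcases eq_or_ne z c with rfl | hzc
  · simp [abs_of_nonneg hc]
  have hmap : (fromBlocks (c • 1) (k₁ • (1 : Matrix n n ℝ)) (k₂ • A) (c • 1 + k₃ • A)).map
      Complex.ofReal = fromBlocks ((c : ℂ) • 1) ((k₁ : ℂ) • 1) ((k₂ : ℂ) • A.map Complex.ofReal)
        ((c : ℂ) • 1 + (k₃ : ℂ) • A.map Complex.ofReal) := by
    simp [fromBlocks_map, Matrix.map_add, Matrix.map_smul]
  obtain ⟨μ', hμ', hz'⟩ := exists_mem_spectrum_of_mem_spectrum_fromBlocks (hmap ▸ hz) hzc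
  obtain ⟨μ, hμ, rfl⟩ := hA.isHermitian.exists_ofReal_of_mem_spectrum_map hμ'
  have hkC : (k₁ : ℂ) * k₂ = k₃ * c := by exact_mod_cast hk
  have hquad : z ^ 2 - ((2 * c + k₃ * μ : ℝ) : ℂ) * z + ((c ^ 2 : ℝ) : ℂ) = 0 := by
    push_cast
    linear_combination hz' + (μ : ℂ) * hkC
  have hμ₀ := hA.nonneg_of_mem_spectrum hμ
  have hμL : k₃ * L ≤ k₃ * μ := mul_le_mul_of_nonpos_left (hL μ hμ) hk₃
  have hnormSq := Complex.normSq_eq_of_sq_sub_mul_add_eq_zero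
    (by nlinarith [mul_nonpos_of_nonpos_of_nonneg hk₃ hμ₀]) hquad
  rw [Complex.normSq_eq_norm_sq] at hnormSq
  exact (sq_eq_sq₀ (norm_nonneg z) hc).1 hnormSq

theorem specRad_eq_of_forall_norm_eq [Nonempty n] {M : Matrix n n ℝ} {r : ℝ}
    (h : ∀ z ∈ spectrum ℂ (M.map Complex.ofReal), ‖z‖ = r) :
    specRad M = r := by
  obtain ⟨z, hz⟩ := spectrum.nonempty_of_isAlgClosed_of_finiteDimensional ℂ (M.map Complex.ofReal)
  have hset : {r' : ℝ | ∃ z ∈ spectrum ℂ (M.map Complex.ofReal), r' = ‖z‖} = {r} :=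
    Set.eq_singleton_iff_unique_mem.2
      ⟨⟨z, hz, (h z hz).symm⟩, fun _ ⟨w, hw, hrw⟩ ↦ hrw ▸ h w hw⟩
  rw [specRad, hset, csSup_singleton]

end

theorem stmt2_general {d : ℕ} (A : Matrix (Fin d) (Fin d) ℝ) (L : ℝ)
    (hApsd : A.PosSemidef)
    (hLspec : L ∈ spectrum ℝ A) (hbound : ∀ lam ∈ spectrum ℝ A, lam ≤ L)
    (γ α : ℕ → ℝ) (hαpos : ∀ k, 0 < α k) (hγpos : ∀ k, 0 < γ (k + 1))
    (hrec : ∀ k, γ (k + 1) * (1 + α k) = γ k)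
    (hstep : ∀ k, L * (α k) ^ 2 = γ (k + 1))
    (k : ℕ) (Etil : Matrix (Fin d ⊕ Fin d) (Fin d ⊕ Fin d) ℝ)
    (hEtil : Etil =
      Matrix.fromBlocks 1 0 0 (γ (k + 1) • 1) *
        ((1 - α k • Matrix.fromBlocks (-1) 0 (-((γ (k + 1))⁻¹ • A)) 0)⁻¹ *
          (1 + α k • Matrix.fromBlocks 0 1 0 0)) *
        (Matrix.fromBlocks 1 0 0 (γ k • 1))⁻¹) :
    specRad Etil = γ (k + 1) / γ k ∧ γ (k + 1) / γ k = 1 / (1 + α k) := by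
  have ha := hαpos k
  have hg := hγpos k
  rw [← hrec k] at hEtil ⊢
  have hratio : γ (k + 1) / (γ (k + 1) * (1 + α k)) = 1 / (1 + α k) := by field_simp
  refine ⟨?_, hratio⟩
  have : Nonempty (Fin d) := by
    obtain _ | hne := isEmpty_or_nonempty (Fin d)
    · simp [spectrum.of_subsingleton] at hLspec
    · exact hne
  rw [hratio, hEtil, gaussSeidel_rescaled_eq_fromBlocks A (by positivity) hg.ne', one_div]
  have hk₃L : -(α k ^ 2 / (γ (k + 1) * (1 + α k) ^ 2)) * L = -(1 / (1 + α k) ^ 2) := by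
    rw [neg_mul, div_mul_eq_mul_div, mul_comm _ L, hstep k]
    field_simp
  refine specRad_eq_of_forall_norm_eq fun z hz ↦
    norm_eq_of_mem_spectrum_map_fromBlocks hApsd hbound (by positivity) (by field_simp)
      (neg_nonpos.2 (by positivity)) ?_ hz
  have hinv : (1 + α k)⁻¹ ≤ 1 := inv_le_one_of_one_le₀ (by linarith)
  rw [hk₃L, neg_le_neg_iff, one_div, ← inv_pow]
  nlinarith [inv_pos.2 (show 0 < 1 + α k by positivity)]

theorem stmt2 {d : ℕ} (A : Matrix (Fin d) (Fin d) ℝ) (L : ℝ)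
    (hA : A.IsSymm) (hApsd : A.PosSemidef)
    (hLspec : L ∈ spectrum ℝ A) (hbound : ∀ lam ∈ spectrum ℝ A, lam ≤ L) (hLpos : 0 < L)
    (γ α : ℕ → ℝ) (hγ0 : 0 < γ 0) (hαpos : ∀ k, 0 < α k) (hγpos : ∀ k, 0 < γ (k + 1))
    (hrec : ∀ k, γ (k + 1) * (1 + α k) = γ k)
    (hstep : ∀ k, L * (α k) ^ 2 = γ (k + 1))
    (k : ℕ) (Etil : Matrix (Fin d ⊕ Fin d) (Fin d ⊕ Fin d) ℝ)
    (hEtil : Etil =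
      Matrix.fromBlocks 1 0 0 (γ (k + 1) • 1) *
        ((1 - α k • Matrix.fromBlocks (-1) 0 (-((γ (k + 1))⁻¹ • A)) 0)⁻¹ *
          (1 + α k • Matrix.fromBlocks 0 1 0 0)) *
        (Matrix.fromBlocks 1 0 0 (γ k • 1))⁻¹) :
    specRad Etil = γ (k + 1) / γ k ∧ γ (k + 1) / γ k = 1 / (1 + α k) :=
  stmt2_general A L hApsd hLspec hbound γ α hαpos hγpos hrec hstep k Etil hEtil
end

section
/- Let L > 0 and γ_0 > 0, and for each k ≥ 0 let α_k > 0 and γ_{k+1} > 0 satisfy γ_{k+1}(1 + α_k) = γ_k and L·α_k² = γ_{k+1}. Then for every k ≥ 0, γ_k/γ_0 ≤ 4(√L + √γ_0)² / (√γ_0 · k + 2√L + 2√γ_0)². In particular the product ∏_{i=0}^{k−1} 1/(1 + α_i) = γ_k/γ_0 decays like O(1/k²). -/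
/-!
Put `s = √L` and `u_k = √γ_k`. Since `α_k = u_{k+1} / s`, the recursion reads
`s u_k² = u_{k+1}² (s + u_{k+1})`, which forces `1/u_{k+1} - 1/u_k ≥ 1/(2(s + u_{k+1}))`.
As `γ` decreases, the right-hand side is at least `1/(2(s + u_0))`, so `1/u_k` grows at least
linearly in `k`; squaring the resulting bound on `u_k` gives the `O(1/k²)` decay.
-/

open Real

lemma add_nsmul_le_of_add_le_succ {M : Type*} [AddCommMonoid M] [PartialOrder M]
    [IsOrderedAddMonoid M] {f : ℕ → M} {c : M} (h : ∀ k, f k + c ≤ f (k + 1)) (k : ℕ) :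
    f 0 + k • c ≤ f k := by
  induction k with
  | zero => simp
  | succ k ih =>
    calc f 0 + (k + 1) • c = (f 0 + k • c) + c := by rw [succ_nsmul, add_assoc]
      _ ≤ f k + c := by gcongr
      _ ≤ f (k + 1) := h k

lemma prod_range_inv_one_add_eq_div {γ α : ℕ → ℝ} (hγ0 : γ 0 ≠ 0) (hα : ∀ k, 1 + α k ≠ 0)
    (hrec : ∀ k, γ (k + 1) * (1 + α k) = γ k) (k : ℕ) :
    ∏ i ∈ Finset.range k, (1 + α i)⁻¹ = γ k / γ 0 := by
  induction k with
  | zero => simp [hγ0]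
  | succ k ih =>
    rw [Finset.prod_range_succ, ih, ← hrec k]
    field_simp [hα k]

lemma one_div_add_le_one_div_of_mul_sq_eq {s u v : ℝ} (hs : 0 < s) (hu : 0 < u) (hv : 0 < v)
    (h : s * v ^ 2 = u ^ 2 * (s + u)) :
    1 / v + 1 / (2 * (s + u)) ≤ 1 / u := by
  have key : s * v ≤ u * (s + u) := by
    refine (pow_le_pow_iff_left₀ (by positivity) (by positivity) two_ne_zero).1 ?_
    calc (s * v) ^ 2 = s * (u ^ 2 * (s + u)) := by rw [← h]; ring
      _ ≤ (s + u) * (u ^ 2 * (s + u)) := by gcongr; linarith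
      _ = (u * (s + u)) ^ 2 := by ring
  rw [div_add_div _ _ hv.ne' (by positivity), div_le_div_iff₀ (by positivity) hu]
  -- times `s (u + v)`, the gap between the two sides is `u² (u (s + u) - s v)`
  nlinarith [mul_pos hs (add_pos hu hv), mul_nonneg (sq_nonneg u) (sub_nonneg.2 key)]

lemma one_div_sqrt_add_le_one_div_sqrt {L a γ γ' : ℝ} (hL : 0 < L) (ha : 0 < a) (hγ' : 0 < γ')
    (hrec : γ' * (1 + a) = γ) (hstep : L * a ^ 2 = γ') :
    1 / √γ + 1 / (2 * (√L + √γ')) ≤ 1 / √γ' := by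
  have hs : 0 < √L := sqrt_pos.2 hL
  have hsa : √L * a = √γ' := by
    rw [← hstep, sqrt_mul hL.le, sqrt_sq ha.le]
  have hγ : 0 < γ := hrec ▸ by positivity
  refine one_div_add_le_one_div_of_mul_sq_eq hs (sqrt_pos.2 hγ') (sqrt_pos.2 hγ) ?_
  rw [sq_sqrt hγ.le, sq_sqrt hγ'.le, ← hrec, ← hsa]
  ring

lemma sq_div_sq_le_of_one_div_add_le {s g w k : ℝ} (hs : 0 ≤ s) (hg : 0 < g) (hw : 0 < w)
    (hk : 0 ≤ k) (h : 1 / g + k / (2 * (s + g)) ≤ 1 / w) :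
    w ^ 2 / g ^ 2 ≤ 4 * (s + g) ^ 2 / (g * k + 2 * s + 2 * g) ^ 2 := by
  have hD : 0 < g * k + 2 * s + 2 * g := by positivity
  have hsum : 1 / g + k / (2 * (s + g)) = 1 / (2 * g * (s + g) / (g * k + 2 * s + 2 * g)) := by
    field_simp
    ring
  rw [hsum, one_div_le_one_div (by positivity) hw, le_div_iff₀ hD] at h
  calc w ^ 2 / g ^ 2 = (w / g) ^ 2 := (div_pow ..).symm
    _ ≤ (2 * (s + g) / (g * k + 2 * s + 2 * g)) ^ 2 := by
        gcongr ?_ ^ 2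
        rw [div_le_div_iff₀ hg hD]
        linarith
    _ = _ := by rw [div_pow, mul_pow]; norm_num

theorem stmt3 (L : ℝ) (hL : 0 < L) (γ α : ℕ → ℝ) (hγ0 : 0 < γ 0)
    (hαpos : ∀ k, 0 < α k) (hγpos : ∀ k, 0 < γ (k + 1))
    (hrec : ∀ k, γ (k + 1) * (1 + α k) = γ k)
    (hstep : ∀ k, L * (α k) ^ 2 = γ (k + 1)) :
    ∀ k : ℕ,
      γ k / γ 0 ≤ 4 * (Real.sqrt L + Real.sqrt (γ 0)) ^ 2 /
        (Real.sqrt (γ 0) * k + 2 * Real.sqrt L + 2 * Real.sqrt (γ 0)) ^ 2 ∧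
      (∏ i ∈ Finset.range k, (1 + α i)⁻¹) = γ k / γ 0 := by
  have hγ : ∀ k, 0 < γ k := fun k => Nat.casesOn k hγ0 hγpos
  have hanti : Antitone γ := antitone_nat_of_succ_le fun k => by
    nlinarith [hrec k, hαpos k, hγpos k]
  have hinc : ∀ k, 1 / √(γ k) + 1 / (2 * (√L + √(γ 0))) ≤ 1 / √(γ (k + 1)) := fun k =>
    calc 1 / √(γ k) + 1 / (2 * (√L + √(γ 0)))
        ≤ 1 / √(γ k) + 1 / (2 * (√L + √(γ (k + 1)))) := by
          gcongr
          exact hanti (Nat.zero_le _)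
      _ ≤ 1 / √(γ (k + 1)) :=
          one_div_sqrt_add_le_one_div_sqrt hL (hαpos k) (hγpos k) (hrec k) (hstep k)
  intro k
  refine ⟨?_, prod_range_inv_one_add_eq_div hγ0.ne' (fun k => by linarith [hαpos k]) hrec k⟩
  have hlin := add_nsmul_le_of_add_le_succ hinc k
  rw [nsmul_eq_mul, mul_one_div] at hlin
  rw [show γ k / γ 0 = √(γ k) ^ 2 / √(γ 0) ^ 2 by rw [sq_sqrt (hγ k).le, sq_sqrt hγ0.le]]
  exact sq_div_sq_le_of_one_div_add_le (sqrt_nonneg L) (sqrt_pos.2 hγ0) (sqrt_pos.2 (hγ k))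
    k.cast_nonneg hlin
end

section
/- Let V be a real Hilbert space, μ ≥ 0, and let f : V → ℝ be differentiable and μ-strongly convex, with global minimizer x*. Let γ_0 > 0 and γ(t) = μ + (γ_0 − μ)e^{−t} (the solution of γ' = μ − γ, γ(0) = γ_0). Suppose x, v : [0, ∞) → V are continuously differentiable and satisfy the NAG flow system x'(t) = v(t) − x(t) and γ(t)·v'(t) = μ(x(t) − v(t)) − ∇f(x(t)) for all t ≥ 0. Then the Lyapunov function 𝓛(t) = f(x(t)) − f(x*) + (γ(t)/2)‖v(t) − x*‖² satisfies 𝓛(t) ≤ e^{−t}·𝓛(0) for all t ≥ 0. -/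
/-!
Along the flow, the Lyapunov function `𝓛 = f(x) - f(x*) + (γ/2)‖v - x*‖²` satisfies
`𝓛' ≤ -𝓛 - (μ/2)‖x - v‖²`: the term `γ v'` cancels `γ⁻¹`, the relaxation `γ' = μ - γ` supplies
`-(γ/2)‖v - x*‖²`, and strong convexity at `x*` around `x` supplies `-(f(x) - f(x*))`.
Hence `eᵗ 𝓛(t)` is antitone.
-/

open RealInnerProductSpace Real

theorem le_exp_neg_mul_of_hasDerivAt_le {L L' : ℝ → ℝ} {c : ℝ}
    (hL : ∀ s ≥ (0 : ℝ), HasDerivAt L (L' s) s) (hle : ∀ s ≥ (0 : ℝ), L' s ≤ -c * L s)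
    {t : ℝ} (ht : 0 ≤ t) : L t ≤ exp (-(c * t)) * L 0 := by
  have hderiv (s : ℝ) (hs : 0 ≤ s) :
      HasDerivAt (fun s => exp (c * s) * L s) (c * exp (c * s) * L s + exp (c * s) * L' s) s :=
    ((((hasDerivAt_id' s).const_mul c).exp).fun_mul (hL s hs)).congr_deriv (by ring)
  have hanti : AntitoneOn (fun s => exp (c * s) * L s) (Set.Ici 0) := by
    refine antitoneOn_of_hasDerivWithinAt_nonpos (convex_Ici 0)
      (fun s hs => (hderiv s hs).continuousAt.continuousWithinAt)
      (fun s hs => (hderiv s (interior_subset hs)).hasDerivWithinAt) fun s hs => ?_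
    have := hle s (interior_subset hs)
    nlinarith [exp_pos (c * s)]
  have := hanti Set.self_mem_Ici ht ht
  simp only [mul_zero, exp_zero, one_mul] at this
  rw [exp_neg, inv_mul_eq_div, le_div_iff₀ (exp_pos _)]
  linarith

theorem hasDerivAt_of_eq_relaxation {μ γ0 : ℝ} {γ : ℝ → ℝ}
    (hγ : ∀ t, γ t = μ + (γ0 - μ) * exp (-t)) (t : ℝ) : HasDerivAt γ (μ - γ t) t := by
  rw [funext hγ]
  exact (((hasDerivAt_neg t).exp.const_mul (γ0 - μ)).const_add μ).congr_deriv (by ring)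

theorem relaxation_pos {μ γ0 t : ℝ} (hμ : 0 ≤ μ) (hγ0 : 0 < γ0) (ht : 0 ≤ t) :
    0 < μ + (γ0 - μ) * exp (-t) := by
  have h1 : 0 < exp (-t) := exp_pos _
  have h2 : exp (-t) ≤ 1 := exp_le_one_iff.mpr (by linarith)
  nlinarith

section InnerProductSpace

variable {V : Type*} [NormedAddCommGroup V] [InnerProductSpace ℝ V]

theorem hasDerivAt_lyapunov [CompleteSpace V] {f : V → ℝ} {g x' v' xstar : V} {x v : ℝ → V}
    {γ : ℝ → ℝ} {γ' c t : ℝ} (hf : HasGradientAt f g (x t)) (hx : HasDerivAt x x' t)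
    (hv : HasDerivAt v v' t) (hγ : HasDerivAt γ γ' t) :
    HasDerivAt (fun s => f (x s) - c + γ s / 2 * ‖v s - xstar‖ ^ 2)
      (⟪g, x'⟫ + (γ' / 2 * ‖v t - xstar‖ ^ 2 + γ t / 2 * (2 * ⟪v t - xstar, v'⟫))) t := by
  have hfx : HasDerivAt (fun s => f (x s)) ⟪g, x'⟫ t :=
    (hf.hasFDerivAt.comp_hasDerivAt t hx).congr_deriv (by simp)
  exact (hfx.sub_const c).add ((hγ.div_const 2).mul (hv.sub_const xstar).norm_sq)

theorem nag_lyapunov_deriv_le {μ γ fx fstar : ℝ} {g x v xstar : V} (hμ : 0 ≤ μ) (hγ : γ ≠ 0)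
    (hconv : fstar - fx - ⟪g, xstar - x⟫ ≥ μ / 2 * ‖xstar - x‖ ^ 2) :
    ⟪g, v - x⟫ + ((μ - γ) / 2 * ‖v - xstar‖ ^ 2
        + γ / 2 * (2 * ⟪v - xstar, γ⁻¹ • (μ • (x - v) - g)⟫))
      ≤ -(fx - fstar + γ / 2 * ‖v - xstar‖ ^ 2) := by
  rw [← neg_sub x xstar, norm_neg] at hconv
  set a := x - xstar
  set b := v - xstar
  have hvx : v - x = b - a := by simp only [a, b]; abel
  have hxv : x - v = a - b := by simp only [a, b]; abel
  have hcancel : γ / 2 * (2 * ⟪b, γ⁻¹ • (μ • (a - b) - g)⟫) = ⟪b, μ • (a - b) - g⟫ := by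
    rw [real_inner_smul_right]; field_simp
  have hab : 0 ≤ μ / 2 * ‖a - b‖ ^ 2 := by positivity
  rw [hvx, hxv, hcancel]
  rw [norm_sub_sq_real] at hab
  simp only [inner_sub_right, inner_smul_right, inner_neg_right, real_inner_self_eq_norm_sq,
    real_inner_comm a b, real_inner_comm g b] at hconv ⊢
  linarith

end InnerProductSpace

theorem stmt4_general {V : Type*} [NormedAddCommGroup V] [InnerProductSpace ℝ V] [CompleteSpace V]
    (μ : ℝ) (hμ : 0 ≤ μ) (f : V → ℝ) (f' : V → V)
    (hdiff : ∀ z, HasGradientAt f (f' z) z)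
    (hconv : ∀ z w : V, f z - f w - ⟪f' w, z - w⟫ ≥ μ / 2 * ‖z - w‖ ^ 2)
    (xstar : V)
    (γ0 : ℝ) (hγ0 : 0 < γ0)
    (γ : ℝ → ℝ) (hγ : ∀ t, γ t = μ + (γ0 - μ) * Real.exp (-t))
    (x v : ℝ → V)
    (hx : ∀ t ≥ (0 : ℝ), HasDerivAt x (v t - x t) t)
    (hv : ∀ t ≥ (0 : ℝ), HasDerivAt v ((γ t)⁻¹ • (μ • (x t - v t) - f' (x t))) t) :
    ∀ t ≥ (0 : ℝ),
      f (x t) - f xstar + γ t / 2 * ‖v t - xstar‖ ^ 2 ≤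
        Real.exp (-t) * (f (x 0) - f xstar + γ 0 / 2 * ‖v 0 - xstar‖ ^ 2) := by
  intro t ht
  have hγ_ne (s : ℝ) (hs : 0 ≤ s) : γ s ≠ 0 := (hγ s ▸ relaxation_pos hμ hγ0 hs).ne'
  simpa using le_exp_neg_mul_of_hasDerivAt_le (c := 1)
    (fun s hs => hasDerivAt_lyapunov (hdiff (x s)) (hx s hs) (hv s hs)
      (hasDerivAt_of_eq_relaxation hγ s))
    (fun s hs => (nag_lyapunov_deriv_le hμ (hγ_ne s hs) (hconv xstar (x s))).trans_eq
      (neg_one_mul _).symm) ht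

theorem stmt4 {V : Type*} [NormedAddCommGroup V] [InnerProductSpace ℝ V] [CompleteSpace V]
    (μ : ℝ) (hμ : 0 ≤ μ) (f : V → ℝ) (f' : V → V)
    (hdiff : ∀ z, HasGradientAt f (f' z) z)
    (hconv : ∀ z w : V, f z - f w - ⟪f' w, z - w⟫ ≥ μ / 2 * ‖z - w‖ ^ 2)
    (xstar : V) (hmin : ∀ z, f xstar ≤ f z)
    (γ0 : ℝ) (hγ0 : 0 < γ0)
    (γ : ℝ → ℝ) (hγ : ∀ t, γ t = μ + (γ0 - μ) * Real.exp (-t))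
    (x v : ℝ → V)
    (hx : ∀ t ≥ (0 : ℝ), HasDerivAt x (v t - x t) t)
    (hv : ∀ t ≥ (0 : ℝ), HasDerivAt v ((γ t)⁻¹ • (μ • (x t - v t) - f' (x t))) t) :
    ∀ t ≥ (0 : ℝ),
      f (x t) - f xstar + γ t / 2 * ‖v t - xstar‖ ^ 2 ≤
        Real.exp (-t) * (f (x 0) - f xstar + γ 0 / 2 * ‖v 0 - xstar‖ ^ 2) :=
  stmt4_general μ hμ f f' hdiff hconv xstar γ0 hγ0 γ hγ x v hx hv
end

section
/- Let V be a real Hilbert space, μ ≥ 0, and let f : V → ℝ be differentiable and μ-strongly convex, with global minimizer x*. Let α : [0, ∞) → (0, ∞) be continuous, and let β : [0, ∞) → (0, ∞) be differentiable with β(0) = γ_0 > 0 and β'(τ) ≤ α(τ)(μ − β(τ)) for all τ ≥ 0. Suppose y, w : [0, ∞) → V are continuously differentiable and satisfy the rescaled NAG flow y'(τ) = α(τ)(w(τ) − y(τ)) and β(τ)·w'(τ) = μ·α(τ)(y(τ) − w(τ)) − α(τ)∇f(y(τ)). Then the Lyapunov function 𝓛̃(τ) = f(y(τ)) − f(x*)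 + (β(τ)/2)‖w(τ) − x*‖² satisfies 𝓛̃(τ) ≤ exp(−∫₀^τ α(s) ds)·𝓛̃(0) for all τ ≥ 0. -/
open RealInnerProductSpace

/-! Along the flow, the derivative of `𝓛̃` is `⟪∇f(y), y'⟫ + β'/2 ‖w - x*‖² + ⟪w - x*, β w'⟫`.
Strong convexity between `y` and `x*` bounds the gradient terms, `β' ≤ α (μ - β)` bounds the
`β'` term, and what remains is `-(α μ / 2) ‖y - w‖² ≤ 0`; hence `𝓛̃' ≤ -α 𝓛̃`, so that
`exp (∫₀^τ α) · 𝓛̃ τ` is nonincreasing. -/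

section Gronwall

variable {a : ℝ} {α E E' : ℝ → ℝ}

theorem antitoneOn_exp_integral_mul (hα : Continuous α)
    (hE : ∀ τ ≥ a, HasDerivAt E (E' τ) τ) (hEα : ∀ τ ≥ a, α τ * E τ + E' τ ≤ 0) :
    AntitoneOn (fun τ => Real.exp (∫ s in a..τ, α s) * E τ) (Set.Ici a) := by
  have hG : ∀ τ ≥ a, HasDerivAt (fun τ => Real.exp (∫ s in a..τ, α s) * E τ)
      (Real.exp (∫ s in a..τ, α s) * (α τ * E τ + E' τ)) τ := fun τ hτ => by
    refine ((hα.integral_hasStrictDerivAt a τ).hasDerivAt.exp.mul (hE τ hτ)).congr_deriv ?_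
    ring
  refine antitoneOn_of_hasDerivWithinAt_nonpos (convex_Ici a)
    (f' := fun τ => Real.exp (∫ s in a..τ, α s) * (α τ * E τ + E' τ))
    (fun τ hτ => (hG τ hτ).continuousAt.continuousWithinAt) (fun τ hτ => ?_) (fun τ hτ => ?_)
  all_goals rw [interior_Ici] at hτ
  · exact (hG τ hτ.le).hasDerivWithinAt
  · exact mul_nonpos_of_nonneg_of_nonpos (Real.exp_pos _).le (hEα τ hτ.le)

theorem le_exp_neg_integral_mul_of_hasDerivAt (hα : ContinuousOn α (Set.Ici a))
    (hE : ∀ τ ≥ a, HasDerivAt E (E' τ) τ) (hEα : ∀ τ ≥ a, α τ * E τ + E' τ ≤ 0) :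
    ∀ τ ≥ a, E τ ≤ Real.exp (-(∫ s in a..τ, α s)) * E a := by
  intro τ hτ
  -- Extend `α` continuously to the left of `a`; this changes none of the integrals involved.
  set αext : ℝ → ℝ := fun t => α (max t a)
  have hαext : Continuous αext :=
    hα.comp_continuous (continuous_id.max continuous_const) fun t => le_max_right t a
  have hαext_eq : ∀ t ≥ a, αext t = α t := fun t ht => by simp [αext, max_eq_left ht]
  have hint : ∫ s in a..τ, αext s = ∫ s in a..τ, α s :=
    intervalIntegral.integral_congr fun s hs => hαext_eq s (Set.uIcc_of_le hτ ▸ hs).1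
  have hmono := antitoneOn_exp_integral_mul hαext hE (fun t ht => hαext_eq t ht ▸ hEα t ht)
    Set.self_mem_Ici hτ hτ
  simp only [intervalIntegral.integral_same, Real.exp_zero, one_mul, hint] at hmono
  rw [Real.exp_neg, ← div_eq_inv_mul, le_div_iff₀' (Real.exp_pos _)]
  exact hmono

end Gronwall

section Lyapunov

variable {V : Type*} [NormedAddCommGroup V] [InnerProductSpace ℝ V]

theorem hasDerivAt_lyapunov_s5 [CompleteSpace V] {f : V → ℝ} {g : V} {y w : ℝ → V} {β : ℝ → ℝ}
    {y' w' : V} {β' τ : ℝ} (c : ℝ) (x : V)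
    (hf : HasGradientAt f g (y τ)) (hy : HasDerivAt y y' τ) (hw : HasDerivAt w w' τ)
    (hβ : HasDerivAt β β' τ) :
    HasDerivAt (fun t => f (y t) - c + β t / 2 * ‖w t - x‖ ^ 2)
      (⟪g, y'⟫ + (β' / 2 * ‖w τ - x‖ ^ 2 + β τ * ⟪w τ - x, w'⟫)) τ := by
  have hfy : HasDerivAt (fun t => f (y t)) ⟪g, y'⟫ τ := by
    have := hf.hasFDerivAt.comp_hasDerivAt τ hy
    rwa [InnerProductSpace.toDual_apply_apply] at this
  refine ((hfy.sub_const c).add ((hβ.div_const 2).mul (hw.sub_const x).norm_sq)).congr_deriv ?_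
  ring

theorem mul_lyapunov_add_deriv_nonpos {α β β' μ fy fx : ℝ} {x y w g w' : V}
    (hα : 0 ≤ α) (hμ : 0 ≤ μ) (hβ' : β' ≤ α * (μ - β))
    (hconv : fx - fy - ⟪g, x - y⟫ ≥ μ / 2 * ‖x - y‖ ^ 2)
    (hw' : β • w' = (μ * α) • (y - w) - α • g) :
    α * (fy - fx + β / 2 * ‖w - x‖ ^ 2) +
      (⟪g, α • (w - y)⟫ + (β' / 2 * ‖w - x‖ ^ 2 + β * ⟪w - x, w'⟫)) ≤ 0 := by
  set a := y - x
  set b := w - x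
  have hwy : w - y = b - a := (sub_sub_sub_cancel_right w y x).symm
  have hxy : x - y = -a := (neg_sub y x).symm
  have hw'b : β * ⟪b, w'⟫ = μ * α * (⟪b, a⟫ - ‖b‖ ^ 2) - α * ⟪g, b⟫ := by
    rw [← real_inner_smul_right, hw', inner_sub_right, real_inner_smul_right,
      real_inner_smul_right, ← sub_sub_sub_cancel_right y w x, inner_sub_right,
      real_inner_self_eq_norm_sq, real_inner_comm g]
  have hab : 0 ≤ ‖a‖ ^ 2 - 2 * ⟪a, b⟫ + ‖b‖ ^ 2 := norm_sub_sq_real a b ▸ sq_nonneg _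
  rw [hxy, inner_neg_right, norm_neg] at hconv
  rw [hwy, real_inner_smul_right, inner_sub_right, hw'b, real_inner_comm a b]
  linarith [mul_le_mul_of_nonneg_left hconv hα, mul_le_mul_of_nonneg_right hβ' (sq_nonneg ‖b‖),
    mul_nonneg (mul_nonneg hα hμ) hab]

end Lyapunov

theorem stmt5_general {V : Type*} [NormedAddCommGroup V] [InnerProductSpace ℝ V] [CompleteSpace V]
    (μ : ℝ) (hμ : 0 ≤ μ) (f : V → ℝ) (f' : V → V)
    (hdiff : ∀ z, HasGradientAt f (f' z) z)
    (hconv : ∀ z w : V, f z - f w - ⟪f' w, z - w⟫ ≥ μ / 2 * ‖z - w‖ ^ 2)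
    (xstar : V)
    (α : ℝ → ℝ) (hαcont : ContinuousOn α (Set.Ici 0)) (hαpos : ∀ τ ≥ (0 : ℝ), 0 < α τ)
    (β β' : ℝ → ℝ) (hβpos : ∀ τ ≥ (0 : ℝ), 0 < β τ)
    (hβderiv : ∀ τ ≥ (0 : ℝ), HasDerivAt β (β' τ) τ)
    (hβineq : ∀ τ ≥ (0 : ℝ), β' τ ≤ α τ * (μ - β τ))
    (y w : ℝ → V)
    (hy : ∀ τ ≥ (0 : ℝ), HasDerivAt y (α τ • (w τ - y τ)) τ)
    (hw : ∀ τ ≥ (0 : ℝ), HasDerivAt w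
      ((β τ)⁻¹ • ((μ * α τ) • (y τ - w τ) - α τ • f' (y τ))) τ) :
    ∀ τ ≥ (0 : ℝ),
      f (y τ) - f xstar + β τ / 2 * ‖w τ - xstar‖ ^ 2 ≤
        Real.exp (-(∫ s in (0 : ℝ)..τ, α s)) *
          (f (y 0) - f xstar + β 0 / 2 * ‖w 0 - xstar‖ ^ 2) := by
  refine le_exp_neg_integral_mul_of_hasDerivAt
    (E := fun τ => f (y τ) - f xstar + β τ / 2 * ‖w τ - xstar‖ ^ 2) hαcont
    (fun τ hτ => hasDerivAt_lyapunov_s5 (f xstar) xstar (hdiff (y τ)) (hy τ hτ) (hw τ hτ)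
      (hβderiv τ hτ))
    (fun τ hτ => mul_lyapunov_add_deriv_nonpos (hαpos τ hτ).le hμ (hβineq τ hτ)
      (hconv xstar (y τ)) ?_)
  rw [smul_smul, mul_inv_cancel₀ (hβpos τ hτ).ne', one_smul]

theorem stmt5 {V : Type*} [NormedAddCommGroup V] [InnerProductSpace ℝ V] [CompleteSpace V]
    (μ : ℝ) (hμ : 0 ≤ μ) (f : V → ℝ) (f' : V → V)
    (hdiff : ∀ z, HasGradientAt f (f' z) z)
    (hconv : ∀ z w : V, f z - f w - ⟪f' w, z - w⟫ ≥ μ / 2 * ‖z - w‖ ^ 2)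
    (xstar : V) (hmin : ∀ z, f xstar ≤ f z)
    (γ0 : ℝ) (hγ0 : 0 < γ0)
    (α : ℝ → ℝ) (hαcont : ContinuousOn α (Set.Ici 0)) (hαpos : ∀ τ ≥ (0 : ℝ), 0 < α τ)
    (β β' : ℝ → ℝ) (hβ0 : β 0 = γ0) (hβpos : ∀ τ ≥ (0 : ℝ), 0 < β τ)
    (hβderiv : ∀ τ ≥ (0 : ℝ), HasDerivAt β (β' τ) τ)
    (hβineq : ∀ τ ≥ (0 : ℝ), β' τ ≤ α τ * (μ - β τ))
    (y w : ℝ → V)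
    (hy : ∀ τ ≥ (0 : ℝ), HasDerivAt y (α τ • (w τ - y τ)) τ)
    (hw : ∀ τ ≥ (0 : ℝ), HasDerivAt w
      ((β τ)⁻¹ • ((μ * α τ) • (y τ - w τ) - α τ • f' (y τ))) τ) :
    ∀ τ ≥ (0 : ℝ),
      f (y τ) - f xstar + β τ / 2 * ‖w τ - xstar‖ ^ 2 ≤
        Real.exp (-(∫ s in (0 : ℝ)..τ, α s)) *
          (f (y 0) - f xstar + β 0 / 2 * ‖w 0 - xstar‖ ^ 2) :=
  stmt5_general μ hμ f f' hdiff hconv xstar α hαcont hαpos β β' hβpos hβderiv hβineq y w hy hw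
end

section
/- Let V be a real Hilbert space, μ ≥ 0, and let f : V → ℝ be differentiable and μ-strongly convex, with global minimizer x*. Let γ_0 > 0, and for each k ≥ 0 let α_k > 0, and let (x_k, v_k, γ_k) satisfy the implicit scheme: γ_{k+1} = γ_k + α_k(μ − γ_{k+1}), (x_{k+1} − x_k)/α_k = v_{k+1} − x_{k+1}, and (v_{k+1} − v_k)/α_k = (μ/γ_k)(x_{k+1} − v_{k+1}) − (1/γ_k)∇f(x_{k+1}). Then for every k ≥ 0 the discrete Lyapunov function 𝓛_k = f(x_k) − f(x*) + (γ_k/2)‖v_k − x*‖² satisfies 𝓛_{k+1} ≤ 𝓛_k/(1 + α_k). -/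
/-!
The proof is a one-step energy estimate. Strong convexity at `x_{k+1}`, tested against `x_k` and
against `x*`, bounds `(1 + α_k)(f(x_{k+1}) - f(x*))` by `f(x_k) - f(x*) + α_k⟪∇f(x_{k+1}), v_{k+1} - x*⟫`
up to a term `-(α_k μ / 2)‖x_{k+1} - x*‖²`. The `v`-update turns that gradient term into inner
products which, by the cosine law and `(1 + α_k)γ_{k+1} = γ_k + α_k μ`, are absorbed by the distance
part of the Lyapunov function, leaving the nonpositive remainder
`-(γ_k/2)‖v_{k+1} - v_k‖² - (α_k μ/2)‖x_{k+1} - v_{k+1}‖²`.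
-/

open RealInnerProductSpace

section ImplicitScheme

variable {V : Type*} [NormedAddCommGroup V] [InnerProductSpace ℝ V]

lemma norm_sub_sq_eq_add_inner (p q r : V) :
    ‖p - r‖ ^ 2 = ‖p - q‖ ^ 2 + 2 * ⟪p - q, q - r⟫ + ‖q - r‖ ^ 2 := by
  rw [← norm_add_sq_real, sub_add_sub_cancel]

lemma pos_of_implicit_step {γ γ' a μ : ℝ} (hγ : 0 < γ) (ha : 0 ≤ a) (hμ : 0 ≤ μ)
    (hγ' : γ' = γ + a * (μ - γ')) : 0 < γ' := by
  have : (1 + a) * γ' = γ + a * μ := by linear_combination hγ'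
  nlinarith [mul_nonneg ha hμ]

noncomputable def lyapunov (f : V → ℝ) (xstar x v : V) (γ : ℝ) : ℝ :=
  f x - f xstar + γ / 2 * ‖v - xstar‖ ^ 2

variable {μ a : ℝ} {f : V → ℝ} {f' : V → V}

lemma function_gap_step (hμ : 0 ≤ μ) (ha : 0 ≤ a)
    (hconv : ∀ z w : V, f z - f w - ⟪f' w, z - w⟫ ≥ μ / 2 * ‖z - w‖ ^ 2)
    {xstar x x' v' : V} (hx : x' - x = a • (v' - x')) :
    (1 + a) * (f x' - f xstar) ≤
      f x - f xstar + a * ⟪f' x', v' - xstar⟫ - a * μ / 2 * ‖x' - xstar‖ ^ 2 := by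
  have hstar := hconv xstar x'
  have hprev : ⟪f' x', x - x'⟫ ≤ f x - f x' := by
    linarith [hconv x x', mul_nonneg hμ (sq_nonneg ‖x - x'‖)]
  have hx' : x - x' = -(a • (v' - x')) := by rw [← hx, neg_sub]
  rw [hx', inner_neg_right, real_inner_smul_right] at hprev
  have hsplit : ⟪f' x', v' - xstar⟫ = ⟪f' x', v' - x'⟫ - ⟪f' x', xstar - x'⟫ := by
    rw [← inner_sub_right, sub_sub_sub_cancel_right]
  rw [hsplit, norm_sub_rev x' xstar]
  linarith [mul_le_mul_of_nonneg_left hstar ha]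

lemma distance_step_eq {γ : ℝ} {g xstar x' v v' : V}
    (hv : γ • (v' - v) = a • (μ • (x' - v') - g)) :
    (γ + a * μ) / 2 * ‖v' - xstar‖ ^ 2 + a * ⟪g, v' - xstar⟫ - a * μ / 2 * ‖x' - xstar‖ ^ 2 =
      γ / 2 * ‖v - xstar‖ ^ 2 - γ / 2 * ‖v' - v‖ ^ 2 - a * μ / 2 * ‖x' - v'‖ ^ 2 := by
  have hg : a * ⟪g, v' - xstar⟫ = a * μ * ⟪x' - v', v' - xstar⟫ - γ * ⟪v' - v, v' - xstar⟫ := by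
    have := congrArg (⟪·, v' - xstar⟫) hv
    simp only [real_inner_smul_left, inner_sub_left] at this ⊢
    linear_combination this
  have hv_dist := norm_sub_sq_eq_add_inner v v' xstar
  have hx_dist := norm_sub_sq_eq_add_inner x' v' xstar
  rw [← neg_sub v' v, inner_neg_left, norm_neg] at hv_dist
  rw [hg, hv_dist, hx_dist]
  ring

lemma lyapunov_step (hμ : 0 ≤ μ) (ha : 0 ≤ a)
    (hconv : ∀ z w : V, f z - f w - ⟪f' w, z - w⟫ ≥ μ / 2 * ‖z - w‖ ^ 2)
    {γ γ' : ℝ} (hγ : 0 ≤ γ) {xstar x x' v v' : V}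
    (hγ' : γ' = γ + a * (μ - γ'))
    (hx : x' - x = a • (v' - x'))
    (hv : γ • (v' - v) = a • (μ • (x' - v') - f' x')) :
    (1 + a) * lyapunov f xstar x' v' γ' ≤ lyapunov f xstar x v γ := by
  have hlhs : (1 + a) * lyapunov f xstar x' v' γ' =
      (1 + a) * (f x' - f xstar) + (γ + a * μ) / 2 * ‖v' - xstar‖ ^ 2 := by
    unfold lyapunov
    linear_combination ‖v' - xstar‖ ^ 2 / 2 * hγ'
  have hgap := function_gap_step (xstar := xstar) hμ ha hconv hx
  have hdist := distance_step_eq (xstar := xstar) hv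
  rw [hlhs, lyapunov]
  linarith [mul_nonneg hγ (sq_nonneg ‖v' - v‖), mul_nonneg (mul_nonneg ha hμ) (sq_nonneg ‖x' - v'‖)]

end ImplicitScheme

theorem stmt6_general {V : Type*} [NormedAddCommGroup V] [InnerProductSpace ℝ V]
    (μ : ℝ) (hμ : 0 ≤ μ) (f : V → ℝ) (f' : V → V)
    (hconv : ∀ z w : V, f z - f w - ⟪f' w, z - w⟫ ≥ μ / 2 * ‖z - w‖ ^ 2)
    (xstar : V)
    (γ α : ℕ → ℝ) (hγ0 : 0 < γ 0) (hα : ∀ k, 0 < α k)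
    (x v : ℕ → V)
    (hγrec : ∀ k, γ (k + 1) = γ k + α k * (μ - γ (k + 1)))
    (hxrec : ∀ k, x (k + 1) - x k = α k • (v (k + 1) - x (k + 1)))
    (hvrec : ∀ k, γ k • (v (k + 1) - v k) =
      α k • (μ • (x (k + 1) - v (k + 1)) - f' (x (k + 1)))) :
    ∀ k : ℕ,
      f (x (k + 1)) - f xstar + γ (k + 1) / 2 * ‖v (k + 1) - xstar‖ ^ 2 ≤
        (f (x k) - f xstar + γ k / 2 * ‖v k - xstar‖ ^ 2) / (1 + α k) := by
  have hγpos : ∀ k, 0 < γ k := by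
    intro k
    induction k with
    | zero => exact hγ0
    | succ k ih => exact pos_of_implicit_step ih (hα k).le hμ (hγrec k)
  intro k
  rw [le_div_iff₀ (by linarith [hα k]), mul_comm]
  exact lyapunov_step hμ (hα k).le hconv (hγpos k).le (hγrec k) (hxrec k) (hvrec k)

theorem stmt6 {V : Type*} [NormedAddCommGroup V] [InnerProductSpace ℝ V] [CompleteSpace V]
    (μ : ℝ) (hμ : 0 ≤ μ) (f : V → ℝ) (f' : V → V)
    (hdiff : ∀ z, HasGradientAt f (f' z) z)
    (hconv : ∀ z w : V, f z - f w - ⟪f' w, z - w⟫ ≥ μ / 2 * ‖z - w‖ ^ 2)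
    (xstar : V) (hmin : ∀ z, f xstar ≤ f z)
    (γ α : ℕ → ℝ) (hγ0 : 0 < γ 0) (hα : ∀ k, 0 < α k)
    (x v : ℕ → V)
    (hγrec : ∀ k, γ (k + 1) = γ k + α k * (μ - γ (k + 1)))
    (hxrec : ∀ k, x (k + 1) - x k = α k • (v (k + 1) - x (k + 1)))
    (hvrec : ∀ k, γ k • (v (k + 1) - v k) =
      α k • (μ • (x (k + 1) - v (k + 1)) - f' (x (k + 1)))) :
    ∀ k : ℕ,
      f (x (k + 1)) - f xstar + γ (k + 1) / 2 * ‖v (k + 1) - xstar‖ ^ 2 ≤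
        (f (x k) - f xstar + γ k / 2 * ‖v k - xstar‖ ^ 2) / (1 + α k) :=
  stmt6_general μ hμ f f' hconv xstar γ α hγ0 hα x v hγrec hxrec hvrec
end

section
/- Let V be a real Hilbert space, 0 ≤ μ ≤ L, and let f ∈ S^{1,1}_{μ,L} with global minimizer x*. Let γ_0 > 0, and for each k ≥ 0 let α_k > 0, and let (x_k, v_k, γ_k) satisfy the Gauss–Seidel splitting scheme: γ_{k+1} = γ_k + α_k(μ − γ_{k+1}), (x_{k+1} − x_k)/α_k = v_k − x_{k+1}, and (v_{k+1} − v_k)/α_k = (μ/γ_k)(x_{k+1} − v_{k+1}) − (1/γ_k)∇f(x_{k+1}). Then for every k ≥ 0, 𝓛_{k+1} − 𝓛_k ≤ −α_k·𝓛_{k+1} + (α_k²/(2γ_k))‖∇f(x_{k+1})‖². -/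
/-!
Expand `γ_{k+1}/2 ‖v_{k+1} - x*‖² - γ_k/2 ‖v_k - x*‖²` by the three-point identity and substitute
the `v`-update. The gradient terms then combine into `-α_k ⟪∇f(x_{k+1}), x_{k+1} - x*⟫`, controlled
by strong convexity at `x*`, plus `-α_k ⟪∇f(x_{k+1}), v_{k+1} - v_k⟫ - γ_k/2 ‖v_{k+1} - v_k‖²`,
controlled by Young's inequality; the `x`-update and convexity between `x_k` and `x_{k+1}` absorb
`f(x_{k+1}) - f(x_k)`, and the `μ`-terms collapse to `-α_k μ/2 ‖x_{k+1} - v_{k+1}‖² ≤ 0`.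
-/

open RealInnerProductSpace

section

variable {V : Type*} [NormedAddCommGroup V] [InnerProductSpace ℝ V]

theorem neg_mul_inner_sub_half_mul_norm_sq_le {g : ℝ} (hg : 0 < g) (a : ℝ) (u w : V) :
    -(a * ⟪u, w⟫) - g / 2 * ‖w‖ ^ 2 ≤ a ^ 2 / (2 * g) * ‖u‖ ^ 2 := by
  have h := norm_add_sq_real (a • u) (g • w)
  rw [norm_smul, norm_smul, real_inner_smul_left, real_inner_smul_right, Real.norm_eq_abs,
    Real.norm_eq_abs, mul_pow, mul_pow, sq_abs, sq_abs] at h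
  have hsq : 0 ≤ ‖a • u + g • w‖ ^ 2 / (2 * g) := by positivity
  rw [h] at hsq
  have : (a ^ 2 * ‖u‖ ^ 2 + 2 * (a * (g * ⟪u, w⟫)) + g ^ 2 * ‖w‖ ^ 2) / (2 * g)
      = a ^ 2 / (2 * g) * ‖u‖ ^ 2 + a * ⟪u, w⟫ + g / 2 * ‖w‖ ^ 2 := by
    field_simp
  linarith

theorem norm_sub_sq_sub_norm_sub_sq (v v' z : V) :
    ‖v' - z‖ ^ 2 - ‖v - z‖ ^ 2 = 2 * ⟪v' - v, v' - z⟫ - ‖v' - v‖ ^ 2 := by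
  have h : v - z = (v' - z) - (v' - v) := by abel
  rw [h, norm_sub_sq_real (v' - z) (v' - v), real_inner_comm]
  ring

theorem lyapunov_step_le {μ : ℝ} (hμ : 0 ≤ μ) {f : V → ℝ} {f' : V → V}
    (hconv : ∀ z w : V, f z - f w - ⟪f' w, z - w⟫ ≥ μ / 2 * ‖z - w‖ ^ 2)
    {a g g' : ℝ} (ha : 0 ≤ a) (hg : 0 < g) {x x' v v' xstar : V}
    (hγ : g' = g + a * (μ - g')) (hx : x' - x = a • (v - x'))
    (hv : g • (v' - v) = a • (μ • (x' - v') - f' x')) :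
    (f x' - f xstar + g' / 2 * ‖v' - xstar‖ ^ 2) - (f x - f xstar + g / 2 * ‖v - xstar‖ ^ 2) ≤
      -a * (f x' - f xstar + g' / 2 * ‖v' - xstar‖ ^ 2) + a ^ 2 / (2 * g) * ‖f' x'‖ ^ 2 := by
  set G := f' x'
  have hdescent : f x' - f x ≤ a * ⟪G, v - x'⟫ := by
    have h := hconv x x'
    rw [show x - x' = -(a • (v - x')) by rw [← hx]; abel, inner_neg_right,
      real_inner_smul_right] at h
    linarith [show 0 ≤ μ / 2 * ‖-(a • (v - x'))‖ ^ 2 by positivity]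
  have hgap : f x' - f xstar ≤ ⟪G, x' - xstar⟫ - μ / 2 * ‖x' - xstar‖ ^ 2 := by
    have h := hconv xstar x'
    rw [show xstar - x' = -(x' - xstar) by abel, inner_neg_right, norm_neg] at h
    linarith
  have hmomentum : g / 2 * ‖v' - xstar‖ ^ 2 - g / 2 * ‖v - xstar‖ ^ 2
      = a * μ * ⟪x' - v', v' - xstar⟫ - a * ⟪G, v' - xstar⟫ - g / 2 * ‖v' - v‖ ^ 2 := by
    have h := congrArg (⟪·, v' - xstar⟫) hv
    rw [real_inner_smul_left, real_inner_smul_left, inner_sub_left (μ • (x' - v')),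
      real_inner_smul_left] at h
    linear_combination (g / 2) * norm_sub_sq_sub_norm_sub_sq v v' xstar + h
  have hsplit : ⟪G, v' - xstar⟫ = ⟪G, x' - xstar⟫ + ⟪G, v' - v⟫ + ⟪G, v - x'⟫ := by
    rw [← inner_add_right, ← inner_add_right]
    congr 1
    abel
  have hpolar :
      ‖x' - xstar‖ ^ 2 = ‖x' - v'‖ ^ 2 + 2 * ⟪x' - v', v' - xstar⟫ + ‖v' - xstar‖ ^ 2 := by
    rw [← norm_add_sq_real]
    congr 2
    abel
  linear_combination hdescent + a * hgap + hmomentum - a * hsplit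
    + neg_mul_inner_sub_half_mul_norm_sq_le hg a G (v' - v) + (‖v' - xstar‖ ^ 2 / 2) * hγ
    - (a * μ / 2) * hpolar + (a * μ / 2) * sq_nonneg ‖x' - v'‖

end

theorem pos_of_eq_add_mul_sub {μ : ℝ} (hμ : 0 ≤ μ) {γ α : ℕ → ℝ} (hγ0 : 0 < γ 0)
    (hα : ∀ k, 0 < α k) (hγrec : ∀ k, γ (k + 1) = γ k + α k * (μ - γ (k + 1))) :
    ∀ k, 0 < γ k
  | 0 => hγ0
  | k + 1 => by
    have hk := pos_of_eq_add_mul_sub hμ hγ0 hα hγrec k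
    have h : (1 + α k) * γ (k + 1) = γ k + α k * μ := by linear_combination hγrec k
    have hprod : 0 < (1 + α k) * γ (k + 1) :=
      h ▸ add_pos_of_pos_of_nonneg hk (mul_nonneg (hα k).le hμ)
    exact pos_of_mul_pos_right hprod (by linarith [hα k])

theorem stmt7_general {V : Type*} [NormedAddCommGroup V] [InnerProductSpace ℝ V]
    (μ : ℝ) (hμ : 0 ≤ μ) (f : V → ℝ) (f' : V → V)
    (hconv : ∀ z w : V, f z - f w - ⟪f' w, z - w⟫ ≥ μ / 2 * ‖z - w‖ ^ 2)
    (xstar : V)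
    (γ α : ℕ → ℝ) (hγ0 : 0 < γ 0) (hα : ∀ k, 0 < α k)
    (x v : ℕ → V)
    (hγrec : ∀ k, γ (k + 1) = γ k + α k * (μ - γ (k + 1)))
    (hxrec : ∀ k, x (k + 1) - x k = α k • (v k - x (k + 1)))
    (hvrec : ∀ k, γ k • (v (k + 1) - v k) =
      α k • (μ • (x (k + 1) - v (k + 1)) - f' (x (k + 1)))) :
    ∀ k : ℕ,
      (f (x (k + 1)) - f xstar + γ (k + 1) / 2 * ‖v (k + 1) - xstar‖ ^ 2) -
        (f (x k) - f xstar + γ k / 2 * ‖v k - xstar‖ ^ 2) ≤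
      -(α k) * (f (x (k + 1)) - f xstar + γ (k + 1) / 2 * ‖v (k + 1) - xstar‖ ^ 2) +
        (α k) ^ 2 / (2 * γ k) * ‖f' (x (k + 1))‖ ^ 2 := fun k =>
  lyapunov_step_le hμ hconv (hα k).le (pos_of_eq_add_mul_sub hμ hγ0 hα hγrec k)
    (hγrec k) (hxrec k) (hvrec k)

theorem stmt7 {V : Type*} [NormedAddCommGroup V] [InnerProductSpace ℝ V] [CompleteSpace V]
    (μ L : ℝ) (hμ : 0 ≤ μ) (hμL : μ ≤ L) (f : V → ℝ) (f' : V → V)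
    (hdiff : ∀ z, HasGradientAt f (f' z) z)
    (hconv : ∀ z w : V, f z - f w - ⟪f' w, z - w⟫ ≥ μ / 2 * ‖z - w‖ ^ 2)
    (hlip : ∀ z w : V, ‖f' z - f' w‖ ≤ L * ‖z - w‖)
    (xstar : V) (hmin : ∀ z, f xstar ≤ f z)
    (γ α : ℕ → ℝ) (hγ0 : 0 < γ 0) (hα : ∀ k, 0 < α k)
    (x v : ℕ → V)
    (hγrec : ∀ k, γ (k + 1) = γ k + α k * (μ - γ (k + 1)))
    (hxrec : ∀ k, x (k + 1) - x k = α k • (v k - x (k + 1)))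
    (hvrec : ∀ k, γ k • (v (k + 1) - v k) =
      α k • (μ • (x (k + 1) - v (k + 1)) - f' (x (k + 1)))) :
    ∀ k : ℕ,
      (f (x (k + 1)) - f xstar + γ (k + 1) / 2 * ‖v (k + 1) - xstar‖ ^ 2) -
        (f (x k) - f xstar + γ k / 2 * ‖v k - xstar‖ ^ 2) ≤
      -(α k) * (f (x (k + 1)) - f xstar + γ (k + 1) / 2 * ‖v (k + 1) - xstar‖ ^ 2) +
        (α k) ^ 2 / (2 * γ k) * ‖f' (x (k + 1))‖ ^ 2 :=
  stmt7_general μ hμ f f' hconv xstar γ α hγ0 hα x v hγrec hxrec hvrec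
end

section
/- Let V be a real Hilbert space, 0 ≤ μ ≤ L with L > 0, and let f ∈ S^{1,1}_{μ,L} with global minimizer x*. Let γ_0 > 0, and for each k ≥ 0 let α_k ∈ (0,1) satisfy L·α_k² = (1 − α_k)γ_k + μ·α_k, with γ_{k+1} = (1 − α_k)γ_k + μ·α_k, (y_k − x_k)/α_k = (γ_k/γ_{k+1})(v_k − y_k), (v_{k+1} − v_k)/α_k = (μ/γ_{k+1})(y_k − v_k) − (1/γ_{k+1})∇f(y_k), and f(x_{k+1}) ≤ f(y_k) − (1/(2L))‖∇f(y_k)‖². Then for all k ≥ 0: 𝓛_k ≤ 𝓛_0 · min{ 4L/(√γ_0·k + 2√L)², (1 − √(min{γ_1, μ}/L))^{k} }. Moreover, if γ_0 ≥ L, then for all k ≥ 1: 𝓛_k ≤ (f(x_0) − f(x*) + (L/2)‖v_0 − x*‖²) · min{ 4/k², (1 − √(μ/L))^{k−1} }. -/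
/-!
One step of the scheme contracts the Lyapunov function: `𝓛_{k+1} ≤ (1 - α_k) 𝓛_k`. Expanding
`‖v_{k+1} - x*‖²`, the term `‖∇f(y_k)‖² / (2L)` cancels against the descent of `x_{k+1}`; strong
convexity between `y_k` and `x*`, convexity between `y_k` and `x_k`, and the choice of `y_k` on the
segment `[x_k, v_k]` make all remaining inner products cancel.

Hence `𝓛_k ≤ λ_k 𝓛_0` with `λ_k = ∏_{i<k} (1 - α_i)`. Since `γ_{k+1} = L α_k² ≥ λ_{k+1} γ_0`, the
sequence `1 / √λ_k` grows by at least `√(γ_0 / L) / 2` per step, which gives the `O(1/k²)` rate;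
since `γ_{k+1} ≥ min(γ_1, μ)`, every `α_k ≥ √(min(γ_1, μ) / L)`, which gives the linear rate.
-/

open RealInnerProductSpace Finset

section Step

variable {V : Type*} [NormedAddCommGroup V] [InnerProductSpace ℝ V]

theorem mul_norm_sub_sq_of_smul_sub_eq {L α : ℝ} (hL : L ≠ 0) (hα : α ≠ 0) {v v' w z : V}
    (h : (L * α ^ 2) • (v' - v) = α • w) :
    L * α ^ 2 / 2 * ‖v' - z‖ ^ 2
      = L * α ^ 2 / 2 * ‖v - z‖ ^ 2 + α * ⟪v - z, w⟫ + 1 / (2 * L) * ‖w‖ ^ 2 := by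
  have hv' : v' - z = (v - z) + (L * α)⁻¹ • w := by
    have : v' - v = (L * α)⁻¹ • w := by
      rw [← smul_right_inj (mul_ne_zero hL (pow_ne_zero 2 hα)), h, smul_smul]
      field_simp
    rw [← this]; abel
  rw [hv', norm_add_sq_real, inner_smul_right, norm_smul, mul_pow, Real.norm_eq_abs, sq_abs]
  field_simp

theorem mul_inner_sub_eq_of_smul_sub_eq {L α γ : ℝ} (g : V) (hα : α ≠ 0) {x y v : V}
    (h : (L * α ^ 2) • (y - x) = (α * γ) • (v - y)) :
    L * α * ⟪g, x - y⟫ = γ * ⟪g, y - v⟫ := by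
  have h := congrArg (⟪g, ·⟫) h
  simp only [inner_smul_right, inner_sub_right] at h ⊢
  apply mul_left_cancel₀ hα
  linear_combination -h

theorem lyapunov_le_one_sub_mul {f : V → ℝ} {f' : V → V} {μ L γ γ' α : ℝ}
    (hconv : ∀ z w : V, f z - f w - ⟪f' w, z - w⟫ ≥ μ / 2 * ‖z - w‖ ^ 2)
    (hμ : 0 ≤ μ) (hL : 0 < L) (hγ : 0 ≤ γ) (hα0 : 0 < α) (hα1 : α < 1)
    (hγ'L : γ' = L * α ^ 2) (hγ' : γ' = (1 - α) * γ + μ * α) {x y v x' v' xstar : V}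
    (hy : γ' • (y - x) = (α * γ) • (v - y))
    (hv : γ' • (v' - v) = α • (μ • (y - v) - f' y))
    (hx : f x' ≤ f y - 1 / (2 * L) * ‖f' y‖ ^ 2) :
    f x' - f xstar + γ' / 2 * ‖v' - xstar‖ ^ 2
      ≤ (1 - α) * (f x - f xstar + γ / 2 * ‖v - xstar‖ ^ 2) := by
  subst hγ'L
  have hdist := mul_norm_sub_sq_of_smul_sub_eq (z := xstar) hL.ne' hα0.ne' hv
  rw [inner_sub_right, inner_smul_right, norm_sub_sq_real (μ • (y - v)), inner_smul_left,
    norm_smul, mul_pow, Real.norm_eq_abs, sq_abs, conj_trivial] at hdist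
  have hstar := hconv xstar y
  rw [show xstar - y = -((y - v) + (v - xstar)) by abel, inner_neg_right, norm_neg,
    inner_add_right, norm_add_sq_real] at hstar
  have hxy : f x ≥ f y + ⟪f' y, x - y⟫ := by
    have := hconv x y
    have : 0 ≤ μ / 2 * ‖x - y‖ ^ 2 := by positivity
    linarith
  have hC := mul_inner_sub_eq_of_smul_sub_eq (f' y) hα0.ne' hy
  rw [real_inner_comm (y - v) (v - xstar), real_inner_comm (f' y) (v - xstar),
    real_inner_comm (f' y) (y - v)] at hdist
  set g := f' y
  set A := ⟪g, y - v⟫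
  set B := ⟪g, v - xstar⟫
  set C := ⟪g, x - y⟫
  set P := ‖y - v‖ ^ 2
  set Q := ‖v - xstar‖ ^ 2
  set R := ⟪y - v, v - xstar⟫
  have hμLα : μ ≤ L * α := by nlinarith
  have hAC : (1 - α) * C = α * A - μ / L * A := by
    refine mul_left_cancel₀ (mul_pos hL hα0).ne' ?_
    rw [mul_sub, show L * α * (μ / L * A) = α * μ * A by field_simp]
    linear_combination (1 - α) * hC - A * hγ'
  calc f x' - f xstar + L * α ^ 2 / 2 * ‖v' - xstar‖ ^ 2
      ≤ (1 - α) * (f y - f xstar) + α * (f y - f xstar + μ * R - B) + L * α ^ 2 / 2 * Q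
          + 1 / (2 * L) * (μ ^ 2 * P - 2 * μ * A) := by
        rw [hdist]; linarith
    _ ≤ (1 - α) * (f x - C - f xstar) + α * (A - μ / 2 * (P + Q)) + L * α ^ 2 / 2 * Q
          + 1 / (2 * L) * (μ ^ 2 * P - 2 * μ * A) := by
        have h1 : (1 - α) * (f y - f xstar) ≤ (1 - α) * (f x - C - f xstar) :=
          mul_le_mul_of_nonneg_left (by linarith) (by linarith)
        have h2 : α * (f y - f xstar + μ * R - B) ≤ α * (A - μ / 2 * (P + Q)) :=
          mul_le_mul_of_nonneg_left (by linarith) hα0.le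
        linarith
    _ = (1 - α) * (f x - f xstar + γ / 2 * Q) + (α * A - (1 - α) * C - μ / L * A)
          + (μ ^ 2 / (2 * L) - α * μ / 2) * P := by
        linear_combination (Q / 2) * hγ'
    _ ≤ (1 - α) * (f x - f xstar + γ / 2 * Q) := by
        have hP : (μ ^ 2 / (2 * L) - α * μ / 2) * P ≤ 0 := by
          rw [show μ ^ 2 / (2 * L) - α * μ / 2 = μ / (2 * L) * (μ - L * α) by field_simp]
          exact mul_nonpos_of_nonpos_of_nonneg
            (mul_nonpos_of_nonneg_of_nonpos (by positivity) (by linarith)) (by positivity)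
        rw [hAC]; linarith

end Step

theorem one_div_sqrt_add_le {a α r : ℝ} (ha : 0 < a) (hα0 : 0 ≤ α) (hα1 : α < 1)
    (hr : r * √((1 - α) * a) ≤ α) : 1 / √a + r / 2 ≤ 1 / √((1 - α) * a) := by
  set s := √a
  set s' := √((1 - α) * a)
  have hs : 0 < s := Real.sqrt_pos.2 ha
  have hs' : 0 < s' := Real.sqrt_pos.2 (by nlinarith)
  have hss' : s' ^ 2 = (1 - α) * s ^ 2 := by
    rw [Real.sq_sqrt (by nlinarith), Real.sq_sqrt ha.le]
  have hle : s' ≤ s := by nlinarith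
  -- `s² - s'² = α s² ≥ r s' s²` and `s + s' ≤ 2 s`
  have key : r * s * s' ≤ 2 * (s - s') := by nlinarith
  rw [div_add_div _ _ hs.ne' two_ne_zero, div_le_div_iff₀ (by positivity) hs']
  nlinarith

section Schedule

variable {μ L : ℝ} {γ α : ℕ → ℝ}

theorem sqrt_div_le_of_le_succ (hL : 0 < L) (hα : ∀ k, 0 < α k)
    (hγα : ∀ k, γ (k + 1) = L * α k ^ 2) {t : ℝ} {k : ℕ} (ht : t ≤ γ (k + 1)) :
    √(t / L) ≤ α k := by
  calc √(t / L) ≤ √(γ (k + 1) / L) := Real.sqrt_le_sqrt (by gcongr)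
    _ = α k := by rw [hγα, mul_div_cancel_left₀ _ hL.ne', Real.sqrt_sq (hα k).le]

theorem le_gamma_of_le_of_le_mu (hα : ∀ k, 0 < α k ∧ α k < 1)
    (hγrec : ∀ k, γ (k + 1) = (1 - α k) * γ k + μ * α k) {m : ℝ} (hmμ : m ≤ μ) {j : ℕ}
    (hm : m ≤ γ j) : ∀ k, j ≤ k → m ≤ γ k := by
  intro k hk
  induction k, hk using Nat.le_induction with
  | base => exact hm
  | succ k _ ih =>
    rw [hγrec]
    nlinarith [hα k]

theorem prod_one_sub_mul_le (hμ : 0 ≤ μ) (hα : ∀ k, 0 < α k ∧ α k < 1)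
    (hγrec : ∀ k, γ (k + 1) = (1 - α k) * γ k + μ * α k) (k : ℕ) :
    (∏ i ∈ range k, (1 - α i)) * γ 0 ≤ γ k := by
  induction k with
  | zero => simp
  | succ k ih =>
    rw [prod_range_succ, hγrec, mul_right_comm]
    nlinarith [hα k]

theorem prod_one_sub_le_sublinear (hμ : 0 ≤ μ) (hL : 0 < L) (hγ0 : 0 < γ 0)
    (hα : ∀ k, 0 < α k ∧ α k < 1) (hγrec : ∀ k, γ (k + 1) = (1 - α k) * γ k + μ * α k)
    (hγα : ∀ k, γ (k + 1) = L * α k ^ 2) (k : ℕ) :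
    ∏ i ∈ range k, (1 - α i) ≤ 4 * L / (√(γ 0) * k + 2 * √L) ^ 2 := by
  set lam : ℕ → ℝ := fun k ↦ ∏ i ∈ range k, (1 - α i)
  have hlam : ∀ k, 0 < lam k := fun k ↦ prod_pos fun i _ ↦ by linarith [hα i]
  have hinv : ∀ k : ℕ, 1 + k * (√(γ 0) / √L / 2) ≤ 1 / √(lam k) := by
    intro k
    induction k with
    | zero => simp [lam]
    | succ k ih =>
      have hlam_succ : lam (k + 1) = (1 - α k) * lam k := by
        simp only [lam, prod_range_succ, mul_comm]
      have hstep : √(γ 0) / √L * √((1 - α k) * lam k) ≤ α k := by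
        calc √(γ 0) / √L * √((1 - α k) * lam k) = √((1 - α k) * lam k * γ 0 / L) := by
              rw [Real.sqrt_div' _ hL.le,
                Real.sqrt_mul (x := (1 - α k) * lam k) (by nlinarith [hlam k, hα k])]
              ring
          _ ≤ α k := by
              refine sqrt_div_le_of_le_succ hL (fun k ↦ (hα k).1) hγα ?_
              rw [← hlam_succ]
              exact prod_one_sub_mul_le hμ hα hγrec (k + 1)
      have := one_div_sqrt_add_le (hlam k) (hα k).1.le (hα k).2 hstep
      rw [hlam_succ]
      push_cast
      linarith
  have hsqrt : 0 < √(lam k) := Real.sqrt_pos.2 (hlam k)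
  have hbound : (√(γ 0) * k + 2 * √L) * √(lam k) ≤ 2 * √L := by
    have h := (le_div_iff₀ hsqrt).1 (hinv k)
    calc (√(γ 0) * k + 2 * √L) * √(lam k)
        = 2 * √L * ((1 + k * (√(γ 0) / √L / 2)) * √(lam k)) := by field_simp; ring
      _ ≤ 2 * √L * 1 := by gcongr
      _ = 2 * √L := mul_one _
  rw [le_div_iff₀ (by positivity)]
  calc lam k * (√(γ 0) * k + 2 * √L) ^ 2 = ((√(γ 0) * k + 2 * √L) * √(lam k)) ^ 2 := by
        rw [mul_pow, Real.sq_sqrt (hlam k).le, mul_comm]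
    _ ≤ (2 * √L) ^ 2 := pow_le_pow_left₀ (by positivity) hbound 2
    _ = 4 * L := by rw [mul_pow, Real.sq_sqrt hL.le]; norm_num

end Schedule

theorem le_prod_mul_of_le_mul {u c : ℕ → ℝ} (hc : ∀ k, 0 ≤ c k)
    (h : ∀ k, u (k + 1) ≤ c k * u k) (n : ℕ) : u n ≤ (∏ i ∈ range n, c i) * u 0 := by
  induction n with
  | zero => simp
  | succ n ih =>
    calc u (n + 1) ≤ c n * u n := h n
      _ ≤ c n * ((∏ i ∈ range n, c i) * u 0) := mul_le_mul_of_nonneg_left ih (hc n)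
      _ = (∏ i ∈ range (n + 1), c i) * u 0 := by rw [prod_range_succ]; ring

section Rates

variable {μ L : ℝ} {γ α ℓ : ℕ → ℝ}

theorem le_mul_sublinear (hμ : 0 ≤ μ) (hL : 0 < L) (hγ0 : 0 < γ 0)
    (hα : ∀ k, 0 < α k ∧ α k < 1) (hγrec : ∀ k, γ (k + 1) = (1 - α k) * γ k + μ * α k)
    (hγα : ∀ k, γ (k + 1) = L * α k ^ 2) (hℓ : ∀ k, 0 ≤ ℓ k)
    (hcontr : ∀ k, ℓ (k + 1) ≤ (1 - α k) * ℓ k) (k : ℕ) :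
    ℓ k ≤ ℓ 0 * (4 * L / (√(γ 0) * k + 2 * √L) ^ 2) :=
  calc ℓ k ≤ (∏ i ∈ range k, (1 - α i)) * ℓ 0 :=
        le_prod_mul_of_le_mul (fun i ↦ by linarith [hα i]) hcontr k
    _ ≤ 4 * L / (√(γ 0) * k + 2 * √L) ^ 2 * ℓ 0 :=
        mul_le_mul_of_nonneg_right (prod_one_sub_le_sublinear hμ hL hγ0 hα hγrec hγα k) (hℓ 0)
    _ = ℓ 0 * (4 * L / (√(γ 0) * k + 2 * √L) ^ 2) := mul_comm _ _

theorem le_mul_geometric (hL : 0 < L) (hα : ∀ k, 0 < α k ∧ α k < 1)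
    (hγα : ∀ k, γ (k + 1) = L * α k ^ 2) (hℓ : ∀ k, 0 ≤ ℓ k)
    (hcontr : ∀ k, ℓ (k + 1) ≤ (1 - α k) * ℓ k) {m : ℝ} (hm : ∀ k, m ≤ γ (k + 1)) (k : ℕ) :
    ℓ k ≤ ℓ 0 * (1 - √(m / L)) ^ k := by
  have hαm : ∀ k, √(m / L) ≤ α k :=
    fun k ↦ sqrt_div_le_of_le_succ hL (fun k ↦ (hα k).1) hγα (hm k)
  rw [mul_comm]
  refine le_geom (by linarith [hαm 0, hα 0]) k fun i _ ↦ ?_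
  calc ℓ (i + 1) ≤ (1 - α i) * ℓ i := hcontr i
    _ ≤ (1 - √(m / L)) * ℓ i := mul_le_mul_of_nonneg_right (by linarith [hαm i]) (hℓ i)

theorem le_mul_min (hμ : 0 ≤ μ) (hL : 0 < L) (hγ0 : 0 < γ 0)
    (hα : ∀ k, 0 < α k ∧ α k < 1) (hγrec : ∀ k, γ (k + 1) = (1 - α k) * γ k + μ * α k)
    (hγα : ∀ k, γ (k + 1) = L * α k ^ 2) (hℓ : ∀ k, 0 ≤ ℓ k)
    (hcontr : ∀ k, ℓ (k + 1) ≤ (1 - α k) * ℓ k) (k : ℕ) :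
    ℓ k ≤ ℓ 0 * min (4 * L / (√(γ 0) * k + 2 * √L) ^ 2) ((1 - √(min (γ 1) μ / L)) ^ k) := by
  have hm : ∀ k, min (γ 1) μ ≤ γ (k + 1) := fun k ↦
    le_gamma_of_le_of_le_mu hα hγrec (min_le_right _ _) (min_le_left _ _) (k + 1) (by omega)
  rw [mul_min_of_nonneg _ _ (hℓ 0)]
  exact le_min (le_mul_sublinear hμ hL hγ0 hα hγrec hγα hℓ hcontr k)
    (le_mul_geometric hL hα hγα hℓ hcontr hm k)

theorem le_mul_min_of_le_gamma_zero (hμ : 0 ≤ μ) (hμL : μ ≤ L) (hL : 0 < L)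
    (hα : ∀ k, 0 < α k ∧ α k < 1) (hγrec : ∀ k, γ (k + 1) = (1 - α k) * γ k + μ * α k)
    (hγα : ∀ k, γ (k + 1) = L * α k ^ 2) (hℓ : ∀ k, 0 ≤ ℓ k)
    (hcontr : ∀ k, ℓ (k + 1) ≤ (1 - α k) * ℓ k) (hLγ : L ≤ γ 0) {a d : ℝ} (ha : 0 ≤ a)
    (hd : 0 ≤ d) (hℓ0 : ℓ 0 = a + γ 0 / 2 * d) {k : ℕ} (hk : 1 ≤ k) :
    ℓ k ≤ (a + L / 2 * d) * min (4 / (k : ℝ) ^ 2) ((1 - √(μ / L)) ^ (k - 1)) := by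
  have hγ0 : 0 < γ 0 := hL.trans_le hLγ
  have hC : 0 ≤ a + L / 2 * d := by positivity
  rw [mul_min_of_nonneg _ _ hC]
  refine le_min ?_ ?_
  · calc ℓ k ≤ ℓ 0 * (4 * L / (√(γ 0) * k + 2 * √L) ^ 2) :=
          le_mul_sublinear hμ hL hγ0 hα hγrec hγα hℓ hcontr k
      _ ≤ ℓ 0 * (4 * L / (γ 0 * k ^ 2)) := by
          have hsq : γ 0 * k ^ 2 ≤ (√(γ 0) * k + 2 * √L) ^ 2 := by
            have : γ 0 * k ^ 2 = (√(γ 0) * k) ^ 2 := by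
              rw [mul_pow, Real.sq_sqrt hγ0.le]
            rw [this]
            gcongr
            exact le_add_of_nonneg_right (by positivity)
          gcongr
          exact hℓ 0
      _ = 4 / k ^ 2 * (L / γ 0 * a + L / 2 * d) := by rw [hℓ0]; field_simp
      _ ≤ (a + L / 2 * d) * (4 / k ^ 2) := by
          rw [mul_comm]
          gcongr
          exact mul_le_of_le_one_left ha ((div_le_one hγ0).2 hLγ)
  · obtain ⟨j, rfl⟩ := Nat.exists_eq_add_of_le' hk
    have hℓ1 : ℓ 1 ≤ a + L / 2 * d := by
      have hγ1 : (1 - α 0) * γ 0 ≤ L := by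
        have h := hγα 0
        rw [hγrec] at h
        have : α 0 ^ 2 ≤ 1 := pow_le_one₀ (hα 0).1.le (hα 0).2.le
        nlinarith [mul_nonneg hμ (hα 0).1.le]
      calc ℓ 1 ≤ (1 - α 0) * a + (1 - α 0) * γ 0 / 2 * d := by
            linear_combination hcontr 0 + (1 - α 0) * hℓ0
        _ ≤ a + L / 2 * d := by gcongr; nlinarith [hα 0]
    have hm : ∀ k, μ ≤ γ (k + 1 + 1) := fun k ↦
      le_gamma_of_le_of_le_mu hα hγrec le_rfl (hμL.trans hLγ) (k + 1 + 1) (by omega)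
    calc ℓ (j + 1) ≤ ℓ 1 * (1 - √(μ / L)) ^ j :=
          le_mul_geometric (γ := fun k ↦ γ (k + 1)) (α := fun k ↦ α (k + 1))
            (ℓ := fun k ↦ ℓ (k + 1)) hL (fun k ↦ hα _) (fun k ↦ hγα _) (fun k ↦ hℓ _)
            (fun k ↦ hcontr _) hm j
      _ ≤ (a + L / 2 * d) * (1 - √(μ / L)) ^ (j + 1 - 1) := by
          have : √(μ / L) ≤ 1 := Real.sqrt_le_one.2 ((div_le_one hL).2 hμL)
          rw [Nat.add_sub_cancel]
          gcongr

end Rates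

theorem stmt11_general {V : Type*} [NormedAddCommGroup V] [InnerProductSpace ℝ V]
    (μ L : ℝ) (hμ : 0 ≤ μ) (hμL : μ ≤ L) (hL : 0 < L) (f : V → ℝ) (f' : V → V)
    (hconv : ∀ z w : V, f z - f w - ⟪f' w, z - w⟫ ≥ μ / 2 * ‖z - w‖ ^ 2)
    (xstar : V) (hmin : ∀ z, f xstar ≤ f z)
    (γ α : ℕ → ℝ) (hγ0 : 0 < γ 0) (hα : ∀ k, 0 < α k ∧ α k < 1)
    (hstep : ∀ k, L * (α k) ^ 2 = (1 - α k) * γ k + μ * α k)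
    (x y v : ℕ → V)
    (hγrec : ∀ k, γ (k + 1) = (1 - α k) * γ k + μ * α k)
    (hyrec : ∀ k, γ (k + 1) • (y k - x k) = (α k * γ k) • (v k - y k))
    (hvrec : ∀ k, γ (k + 1) • (v (k + 1) - v k) = α k • (μ • (y k - v k) - f' (y k)))
    (hxrec : ∀ k, f (x (k + 1)) ≤ f (y k) - 1 / (2 * L) * ‖f' (y k)‖ ^ 2) :
    (∀ k : ℕ,
      f (x k) - f xstar + γ k / 2 * ‖v k - xstar‖ ^ 2 ≤
        (f (x 0) - f xstar + γ 0 / 2 * ‖v 0 - xstar‖ ^ 2) *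
          min (4 * L / (Real.sqrt (γ 0) * k + 2 * Real.sqrt L) ^ 2)
            ((1 - Real.sqrt (min (γ 1) μ / L)) ^ k)) ∧
    (γ 0 ≥ L → ∀ k : ℕ, 1 ≤ k →
      f (x k) - f xstar + γ k / 2 * ‖v k - xstar‖ ^ 2 ≤
        (f (x 0) - f xstar + L / 2 * ‖v 0 - xstar‖ ^ 2) *
          min (4 / (k : ℝ) ^ 2) ((1 - Real.sqrt (μ / L)) ^ (k - 1))) := by
  have hγα : ∀ k, γ (k + 1) = L * α k ^ 2 := fun k ↦ by rw [hγrec, ← hstep]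
  have hγ : ∀ k, 0 ≤ γ k
    | 0 => hγ0.le
    | k + 1 => by rw [hγα]; positivity
  set ℓ : ℕ → ℝ := fun k ↦ f (x k) - f xstar + γ k / 2 * ‖v k - xstar‖ ^ 2
  have hℓ : ∀ k, 0 ≤ ℓ k := fun k ↦
    add_nonneg (sub_nonneg.2 (hmin _)) (mul_nonneg (div_nonneg (hγ k) zero_le_two) (sq_nonneg _))
  have hcontr : ∀ k, ℓ (k + 1) ≤ (1 - α k) * ℓ k := fun k ↦
    lyapunov_le_one_sub_mul hconv hμ hL (hγ k) (hα k).1 (hα k).2 (hγα k) (hγrec k) (hyrec k)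
      (hvrec k) (hxrec k)
  exact ⟨le_mul_min hμ hL hγ0 hα hγrec hγα hℓ hcontr, fun hLγ _ hk ↦
    le_mul_min_of_le_gamma_zero hμ hμL hL hα hγrec hγα hℓ hcontr hLγ (sub_nonneg.2 (hmin _))
      (sq_nonneg _) rfl hk⟩

theorem stmt11 {V : Type*} [NormedAddCommGroup V] [InnerProductSpace ℝ V] [CompleteSpace V]
    (μ L : ℝ) (hμ : 0 ≤ μ) (hμL : μ ≤ L) (hL : 0 < L) (f : V → ℝ) (f' : V → V)
    (hdiff : ∀ z, HasGradientAt f (f' z) z)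
    (hconv : ∀ z w : V, f z - f w - ⟪f' w, z - w⟫ ≥ μ / 2 * ‖z - w‖ ^ 2)
    (hlip : ∀ z w : V, ‖f' z - f' w‖ ≤ L * ‖z - w‖)
    (xstar : V) (hmin : ∀ z, f xstar ≤ f z)
    (γ α : ℕ → ℝ) (hγ0 : 0 < γ 0) (hα : ∀ k, 0 < α k ∧ α k < 1)
    (hstep : ∀ k, L * (α k) ^ 2 = (1 - α k) * γ k + μ * α k)
    (x y v : ℕ → V)
    (hγrec : ∀ k, γ (k + 1) = (1 - α k) * γ k + μ * α k)
    (hyrec : ∀ k, γ (k + 1) • (y k - x k) = (α k * γ k) • (v k - y k))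
    (hvrec : ∀ k, γ (k + 1) • (v (k + 1) - v k) = α k • (μ • (y k - v k) - f' (y k)))
    (hxrec : ∀ k, f (x (k + 1)) ≤ f (y k) - 1 / (2 * L) * ‖f' (y k)‖ ^ 2) :
    (∀ k : ℕ,
      f (x k) - f xstar + γ k / 2 * ‖v k - xstar‖ ^ 2 ≤
        (f (x 0) - f xstar + γ 0 / 2 * ‖v 0 - xstar‖ ^ 2) *
          min (4 * L / (Real.sqrt (γ 0) * k + 2 * Real.sqrt L) ^ 2)
            ((1 - Real.sqrt (min (γ 1) μ / L)) ^ k)) ∧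
    (γ 0 ≥ L → ∀ k : ℕ, 1 ≤ k →
      f (x k) - f xstar + γ k / 2 * ‖v k - xstar‖ ^ 2 ≤
        (f (x 0) - f xstar + L / 2 * ‖v 0 - xstar‖ ^ 2) *
          min (4 / (k : ℝ) ^ 2) ((1 - Real.sqrt (μ / L)) ^ (k - 1))) :=
  stmt11_general μ L hμ hμL hL f f' hconv xstar hmin γ α hγ0 hα hstep x y v hγrec hyrec hvrec hxrec
end

section
/- Let V be a real Hilbert space, 0 ≤ μ ≤ L, let f ∈ S^{1,1}_{μ,L}, let g : V → ℝ be convex, and set F = f + g. Fix λ > 0 and x ∈ V, and suppose G ∈ V satisfies the subgradient inclusion G − ∇f(x) ∈ ∂g(x − λG), i.e. g(z) ≥ g(x − λG) + ⟨G − ∇f(x), z − (x − λG)⟩ for all z ∈ V. Then for every y ∈ V: F(y) ≥ F(x − λG) + ⟨G, y − x⟩ + (μ/2)‖y − x‖² + (λ/2)(2 − λL)‖G‖². -/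
open RealInnerProductSpace

/-!
Add three inequalities: strong convexity of `f` between `y` and `x`, the subgradient inequality
for `g` between `y` and `x⁺ = x - λG`, and the descent lemma
`f x⁺ ≤ f x - λ⟪∇f x, G⟫ + (Lλ²/2)‖G‖²`. The terms in `∇f x` cancel.
-/

section LipschitzGradient

variable {V : Type*} [NormedAddCommGroup V] [InnerProductSpace ℝ V] [CompleteSpace V] {f : V → ℝ}

theorem HasGradientAt.hasDerivAt_comp_add_smul {g x d : V} {t : ℝ}
    (h : HasGradientAt f g (x + t • d)) :
    HasDerivAt (fun s : ℝ => f (x + s • d)) ⟪g, d⟫ t := by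
  have hline : HasDerivAt (fun s : ℝ => x + s • d) d t := by
    simpa using ((hasDerivAt_id t).smul_const d).const_add x
  simpa [Function.comp_def] using h.hasFDerivAt.comp_hasDerivAt t hline

theorem apply_add_le_of_lipschitz_gradient {f' : V → V} {L : ℝ}
    (hdiff : ∀ z, HasGradientAt f (f' z) z)
    (hlip : ∀ z w : V, ‖f' z - f' w‖ ≤ L * ‖z - w‖) (x d : V) :
    f (x + d) ≤ f x + ⟪f' x, d⟫ + L / 2 * ‖d‖ ^ 2 := by
  set φ : ℝ → ℝ := fun t => f (x + t • d) - t * ⟪f' x, d⟫ - L / 2 * t ^ 2 * ‖d‖ ^ 2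
  set φ' : ℝ → ℝ := fun t => ⟪f' (x + t • d) - f' x, d⟫ - L * t * ‖d‖ ^ 2
  have hφ : ∀ t, HasDerivAt φ (φ' t) t := fun t => by
    refine ((((hdiff (x + t • d)).hasDerivAt_comp_add_smul).sub
      ((hasDerivAt_id t).mul_const ⟪f' x, d⟫)).sub
      (((hasDerivAt_pow 2 t).const_mul (L / 2)).mul_const (‖d‖ ^ 2))).congr_deriv ?_
    simp only [φ', inner_sub_left]
    ring
  have hφ'_nonpos : ∀ t, 0 ≤ t → φ' t ≤ 0 := fun t ht => by
    have hgrad : ‖f' (x + t • d) - f' x‖ ≤ L * (t * ‖d‖) := by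
      simpa [norm_smul, abs_of_nonneg ht] using hlip (x + t • d) x
    have := (real_inner_le_norm _ d).trans (mul_le_mul_of_nonneg_right hgrad (norm_nonneg d))
    simp only [φ']
    linarith
  have hanti : AntitoneOn φ (Set.Ici 0) :=
    antitoneOn_of_hasDerivWithinAt_nonpos (convex_Ici 0)
      (fun t _ => (hφ t).continuousAt.continuousWithinAt)
      (fun t _ => (hφ t).hasDerivWithinAt)
      (fun t ht => hφ'_nonpos t (interior_subset ht))
  have h01 := hanti Set.self_mem_Ici (Set.mem_Ici.2 zero_le_one) zero_le_one
  simp only [φ, zero_smul, add_zero, one_smul, zero_mul, one_mul, one_pow] at h01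
  linarith

end LipschitzGradient

theorem stmt12_general {V : Type*} [NormedAddCommGroup V] [InnerProductSpace ℝ V] [CompleteSpace V]
    (μ L : ℝ) (f : V → ℝ) (f' : V → V)
    (hdiff : ∀ z, HasGradientAt f (f' z) z)
    (hconv : ∀ z w : V, f z - f w - ⟪f' w, z - w⟫ ≥ μ / 2 * ‖z - w‖ ^ 2)
    (hlip : ∀ z w : V, ‖f' z - f' w‖ ≤ L * ‖z - w‖)
    (g : V → ℝ)
    (lam : ℝ) (x G : V)
    (hsub : ∀ z : V, g z ≥ g (x - lam • G) + ⟪G - f' x, z - (x - lam • G)⟫) :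
    ∀ y : V,
      f y + g y ≥ (f (x - lam • G) + g (x - lam • G)) + ⟪G, y - x⟫ +
        μ / 2 * ‖y - x‖ ^ 2 + lam / 2 * (2 - lam * L) * ‖G‖ ^ 2 := by
  intro y
  have hstrong := hconv y x
  have hsubgrad := hsub y
  have hdescent := apply_add_le_of_lipschitz_gradient hdiff hlip x (-(lam • G))
  rw [← sub_eq_add_neg, inner_neg_right, real_inner_smul_right, norm_neg, norm_smul,
    Real.norm_eq_abs, mul_pow, sq_abs] at hdescent
  have hsplit : y - (x - lam • G) = (y - x) + lam • G := by abel
  rw [hsplit, inner_add_right, real_inner_smul_right, inner_sub_left, inner_sub_left,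
    real_inner_self_eq_norm_sq] at hsubgrad
  linarith

theorem stmt12 {V : Type*} [NormedAddCommGroup V] [InnerProductSpace ℝ V] [CompleteSpace V]
    (μ L : ℝ) (hμ : 0 ≤ μ) (hμL : μ ≤ L) (f : V → ℝ) (f' : V → V)
    (hdiff : ∀ z, HasGradientAt f (f' z) z)
    (hconv : ∀ z w : V, f z - f w - ⟪f' w, z - w⟫ ≥ μ / 2 * ‖z - w‖ ^ 2)
    (hlip : ∀ z w : V, ‖f' z - f' w‖ ≤ L * ‖z - w‖)
    (g : V → ℝ) (hg : ConvexOn ℝ Set.univ g)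
    (lam : ℝ) (hlam : 0 < lam) (x G : V)
    (hsub : ∀ z : V, g z ≥ g (x - lam • G) + ⟪G - f' x, z - (x - lam • G)⟫) :
    ∀ y : V,
      f y + g y ≥ (f (x - lam • G) + g (x - lam • G)) + ⟪G, y - x⟫ +
        μ / 2 * ‖y - x‖ ^ 2 + lam / 2 * (2 - lam * L) * ‖G‖ ^ 2 :=
  stmt12_general μ L f f' hdiff hconv hlip g lam x G hsub
end

section
/- Let V be a real Hilbert space, 0 ≤ μ ≤ L with L > 0, let f ∈ S^{1,1}_{μ,L}, let g : V → ℝ be convex, F = f + g, and let x* be a global minimizer of F. Let γ_0 > 0 and consider OAG Method-I: for each k ≥ 0, α_k > 0 satisfies L·α_k² = γ_k(1 + α_k); γ_{k+1} = (γ_k + μα_k)/(1 + α_k); y_k = (x_k + α_k v_k)/(1 + α_k); G_k ∈ V satisfies g(z) ≥ g(y_k − G_k/L) + ⟨G_k − ∇f(y_k), z − (y_k − G_k/L)⟩ for all z ∈ V; x_{k+1} = y_k − (1/L)G_k; and v_{k+1} = (γ_k v_k + μα_k y_k − α_k G_k)/(γ_k + μα_k). Then for every k ≥ 0, 𝓛_{k+1}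 ≤ 𝓛_k/(1 + α_k), where 𝓛_k = F(x_k) − F(x*) + (γ_k/2)‖v_k − x*‖². -/
/-! With `x⁺ = y - G / L`, the descent lemma for `f`, strong convexity of `f` at `y` and the
subgradient inequality for `g` at `x⁺` give, for every `z`,
`F x⁺ ≤ F z + ⟪G, y - z⟫ - ‖G‖² / (2L) - μ/2 ‖z - y‖²`.
Add this at `z = x_k` and `α_k` times it at `z = x⋆`. Since `(1 + α_k) y_k = x_k + α_k v_k`, the
inner products combine to `α_k ⟪G, v_k - x⋆⟫`, which is cancelled by the expansion of
`γ_{k+1}(1 + α_k) ‖v_{k+1} - x⋆‖²` (bounded through convexity of `‖·‖²`); the `‖G‖²` terms cancel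
because `L α_k² = γ_k (1 + α_k)`. -/

open RealInnerProductSpace

section

variable {V : Type*} [NormedAddCommGroup V] [InnerProductSpace ℝ V]

theorem norm_smul_add_smul_sq_le {p q : ℝ} (hp : 0 ≤ p) (hq : 0 ≤ q) (u w : V) :
    ‖p • u + q • w‖ ^ 2 ≤ (p + q) * (p * ‖u‖ ^ 2 + q * ‖w‖ ^ 2) := by
  have hgap : (p + q) * (p * ‖u‖ ^ 2 + q * ‖w‖ ^ 2) - ‖p • u + q • w‖ ^ 2 =
      p * q * ‖u - w‖ ^ 2 := by
    rw [norm_add_sq_real, norm_sub_sq_real, norm_smul, norm_smul, real_inner_smul_left,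
      real_inner_smul_right, Real.norm_of_nonneg hp, Real.norm_of_nonneg hq]
    ring
  nlinarith [mul_nonneg (mul_nonneg hp hq) (sq_nonneg ‖u - w‖)]

theorem mul_norm_sub_sq_le_of_smul_eq {γ m α : ℝ} (hγ : 0 < γ) (hm : 0 ≤ m)
    {v v' y G x : V} (hv' : (γ + m) • v' = γ • v + m • y - α • G) :
    (γ + m) * ‖v' - x‖ ^ 2 ≤
      γ * ‖v - x‖ ^ 2 - 2 * α * ⟪G, v - x⟫ + α ^ 2 / γ * ‖G‖ ^ 2 + m * ‖y - x‖ ^ 2 := by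
  have hs : 0 < γ + m := by linarith
  have hcomb : γ • (v - x - (α / γ) • G) + m • (y - x) = (γ + m) • (v' - x) := by
    rw [smul_sub (γ + m), hv', smul_sub, smul_smul, mul_div_cancel₀ _ hγ.ne']
    module
  have h := norm_smul_add_smul_sq_le hγ.le hm (v - x - (α / γ) • G) (y - x)
  rw [hcomb, norm_smul, Real.norm_of_nonneg hs.le, mul_pow, sq, mul_assoc,
    mul_le_mul_iff_right₀ hs] at h
  have hu : γ * ‖v - x - (α / γ) • G‖ ^ 2 =
      γ * ‖v - x‖ ^ 2 - 2 * α * ⟪G, v - x⟫ + α ^ 2 / γ * ‖G‖ ^ 2 := by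
    rw [norm_sub_sq_real, norm_smul, real_inner_smul_right, real_inner_comm,
      Real.norm_eq_abs, mul_pow, sq_abs]
    field_simp
  linarith

theorem le_add_inner_add_sq_of_lipschitz_gradient [CompleteSpace V] {f : V → ℝ} {f' : V → V}
    {L : ℝ} (hf : ∀ z, HasGradientAt f (f' z) z)
    (hlip : ∀ z w : V, ‖f' z - f' w‖ ≤ L * ‖z - w‖) (z w : V) :
    f z ≤ f w + ⟪f' w, z - w⟫ + L / 2 * ‖z - w‖ ^ 2 := by
  set u := z - w
  set φ : ℝ → ℝ := fun t => f (w + t • u) - t * ⟪f' w, u⟫ - L / 2 * t ^ 2 * ‖u‖ ^ 2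
  have hφ' (t : ℝ) : HasDerivAt φ (⟪f' (w + t • u) - f' w, u⟫ - L * t * ‖u‖ ^ 2) t := by
    have hline : HasDerivAt (fun t : ℝ => w + t • u) u t := by
      simpa using ((hasDerivAt_id t).smul_const u).const_add w
    have hfline := (hf (w + t • u)).hasFDerivAt.comp_hasDerivAt t hline
    rw [InnerProductSpace.toDual_apply_apply] at hfline
    refine ((hfline.sub ((hasDerivAt_id t).mul_const ⟪f' w, u⟫)).sub
      (((hasDerivAt_pow 2 t).const_mul (L / 2)).mul_const (‖u‖ ^ 2))).congr_deriv ?_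
    rw [inner_sub_left]
    push_cast
    ring
  have hφ'_nonpos (t : ℝ) (ht : 0 < t) : ⟪f' (w + t • u) - f' w, u⟫ - L * t * ‖u‖ ^ 2 ≤ 0 := by
    have hdist : ‖w + t • u - w‖ = t * ‖u‖ := by
      rw [add_sub_cancel_left, norm_smul, Real.norm_of_nonneg ht.le]
    have hgrad := hlip (w + t • u) w
    rw [hdist] at hgrad
    have := real_inner_le_norm (f' (w + t • u) - f' w) u
    nlinarith [mul_le_mul_of_nonneg_right hgrad (norm_nonneg u)]
  have hanti : AntitoneOn φ (Set.Icc 0 1) :=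
    antitoneOn_of_hasDerivWithinAt_nonpos (convex_Icc 0 1)
      (fun t _ => (hφ' t).continuousAt.continuousWithinAt)
      (fun t _ => (hφ' t).hasDerivWithinAt)
      (fun t ht => hφ'_nonpos t (by rw [interior_Icc] at ht; exact ht.1))
  have h := hanti (Set.left_mem_Icc.2 zero_le_one) (Set.right_mem_Icc.2 zero_le_one) zero_le_one
  simp only [φ, one_smul, zero_smul, add_zero, u, add_sub_cancel] at h
  linarith

theorem add_le_of_composite_gradient_step [CompleteSpace V] {f g : V → ℝ} {f' : V → V}
    {μ L : ℝ} (hL : 0 < L) (hf : ∀ z, HasGradientAt f (f' z) z)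
    (hconv : ∀ z w : V, f z - f w - ⟪f' w, z - w⟫ ≥ μ / 2 * ‖z - w‖ ^ 2)
    (hlip : ∀ z w : V, ‖f' z - f' w‖ ≤ L * ‖z - w‖) {y G : V}
    (hG : ∀ z : V, g z ≥ g (y - (1 / L) • G) + ⟪G - f' y, z - (y - (1 / L) • G)⟫) (z : V) :
    f (y - (1 / L) • G) + g (y - (1 / L) • G) ≤
      f z + g z + ⟪G, y - z⟫ - 1 / (2 * L) * ‖G‖ ^ 2 - μ / 2 * ‖z - y‖ ^ 2 := by
  have hdescent := le_add_inner_add_sq_of_lipschitz_gradient hf hlip (y - (1 / L) • G) y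
  rw [sub_sub_cancel_left, inner_neg_right, norm_neg, real_inner_smul_right, norm_smul,
    Real.norm_of_nonneg (by positivity), mul_pow] at hdescent
  have hsub := hG z
  rw [sub_sub_eq_add_sub, add_sub_right_comm, inner_add_right, real_inner_smul_right,
    inner_sub_left, inner_sub_left, real_inner_self_eq_norm_sq] at hsub
  have hyz : ⟪G, y - z⟫ = -⟪G, z - y⟫ := by rw [← inner_neg_right, neg_sub]
  have hL2 : L / 2 * ((1 / L) ^ 2 * ‖G‖ ^ 2) = 1 / L * ‖G‖ ^ 2 - 1 / (2 * L) * ‖G‖ ^ 2 := by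
    field_simp
    ring
  linarith [hconv z y]

end

theorem stmt13_general {V : Type*} [NormedAddCommGroup V] [InnerProductSpace ℝ V] [CompleteSpace V]
    (μ L : ℝ) (hμ : 0 ≤ μ) (hL : 0 < L) (f : V → ℝ) (f' : V → V)
    (hdiff : ∀ z, HasGradientAt f (f' z) z)
    (hconv : ∀ z w : V, f z - f w - ⟪f' w, z - w⟫ ≥ μ / 2 * ‖z - w‖ ^ 2)
    (hlip : ∀ z w : V, ‖f' z - f' w‖ ≤ L * ‖z - w‖)
    (g : V → ℝ) (xstar : V) (γ α : ℕ → ℝ) (hα : ∀ k, 0 < α k)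
    (hstep : ∀ k, L * (α k) ^ 2 = γ k * (1 + α k))
    (x y v G : ℕ → V)
    (hγrec : ∀ k, γ (k + 1) = (γ k + μ * α k) / (1 + α k))
    (hyrec : ∀ k, (1 + α k) • y k = x k + α k • v k)
    (hG : ∀ k, ∀ z : V, g z ≥ g (y k - (1 / L) • G k) +
      ⟪G k - f' (y k), z - (y k - (1 / L) • G k)⟫)
    (hxrec : ∀ k, x (k + 1) = y k - (1 / L) • G k)
    (hvrec : ∀ k, (γ k + μ * α k) • v (k + 1) =
      γ k • v k + (μ * α k) • y k - α k • G k) :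
    ∀ k : ℕ,
      (f (x (k + 1)) + g (x (k + 1))) - (f xstar + g xstar) +
          γ (k + 1) / 2 * ‖v (k + 1) - xstar‖ ^ 2 ≤
        ((f (x k) + g (x k)) - (f xstar + g xstar) +
          γ k / 2 * ‖v k - xstar‖ ^ 2) / (1 + α k) := by
  intro k
  have hαk := hα k
  have hγk : 0 < γ k := by
    have : 0 < γ k * (1 + α k) := hstep k ▸ by positivity
    exact pos_of_mul_pos_left this (by positivity)
  have hgrad_step z := hxrec k ▸ add_le_of_composite_gradient_step hL hdiff hconv hlip (hG k) z
  have hx := hgrad_step (x k)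
  have hxstar := mul_le_mul_of_nonneg_left (hgrad_step xstar) hαk.le
  rw [norm_sub_rev] at hxstar
  have hv := mul_norm_sub_sq_le_of_smul_eq (x := xstar) hγk (mul_nonneg hμ hαk.le) (hvrec k)
  have hinner : ⟪G k, y k - x k⟫ + α k * ⟪G k, y k - xstar⟫ = α k * ⟪G k, v k - xstar⟫ := by
    rw [← real_inner_smul_right, ← real_inner_smul_right, ← inner_add_right]
    congr 1
    calc y k - x k + α k • (y k - xstar) = (1 + α k) • y k - x k - α k • xstar := by module
      _ = α k • (v k - xstar) := by rw [hyrec k]; module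
  have hγ : γ (k + 1) * (1 + α k) = γ k + μ * α k := by
    rw [hγrec k, div_mul_cancel₀ _ (by positivity)]
  have hα2 : α k ^ 2 / γ k = (1 + α k) * (2 * (1 / (2 * L))) := by
    field_simp
    linarith [hstep k]
  rw [hα2, ← hγ] at hv
  rw [le_div_iff₀ (by positivity)]
  linarith [mul_nonneg hμ (sq_nonneg ‖x k - y k‖)]

theorem stmt13 {V : Type*} [NormedAddCommGroup V] [InnerProductSpace ℝ V] [CompleteSpace V]
    (μ L : ℝ) (hμ : 0 ≤ μ) (hμL : μ ≤ L) (hL : 0 < L) (f : V → ℝ) (f' : V → V)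
    (hdiff : ∀ z, HasGradientAt f (f' z) z)
    (hconv : ∀ z w : V, f z - f w - ⟪f' w, z - w⟫ ≥ μ / 2 * ‖z - w‖ ^ 2)
    (hlip : ∀ z w : V, ‖f' z - f' w‖ ≤ L * ‖z - w‖)
    (g : V → ℝ) (hg : ConvexOn ℝ Set.univ g)
    (xstar : V) (hmin : ∀ z, f xstar + g xstar ≤ f z + g z)
    (γ α : ℕ → ℝ) (hγ0 : 0 < γ 0) (hα : ∀ k, 0 < α k)
    (hstep : ∀ k, L * (α k) ^ 2 = γ k * (1 + α k))
    (x y v G : ℕ → V)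
    (hγrec : ∀ k, γ (k + 1) = (γ k + μ * α k) / (1 + α k))
    (hyrec : ∀ k, (1 + α k) • y k = x k + α k • v k)
    (hG : ∀ k, ∀ z : V, g z ≥ g (y k - (1 / L) • G k) +
      ⟪G k - f' (y k), z - (y k - (1 / L) • G k)⟫)
    (hxrec : ∀ k, x (k + 1) = y k - (1 / L) • G k)
    (hvrec : ∀ k, (γ k + μ * α k) • v (k + 1) =
      γ k • v k + (μ * α k) • y k - α k • G k) :
    ∀ k : ℕ,
      (f (x (k + 1)) + g (x (k + 1))) - (f xstar + g xstar) +
          γ (k + 1) / 2 * ‖v (k + 1) - xstar‖ ^ 2 ≤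
        ((f (x k) + g (x k)) - (f xstar + g xstar) +
          γ k / 2 * ‖v k - xstar‖ ^ 2) / (1 + α k) :=
  stmt13_general μ L hμ hL f f' hdiff hconv hlip g xstar γ α hα hstep x y v G hγrec hyrec hG hxrec
    hvrec
end

section
/- Let V be a real Hilbert space, 0 ≤ μ ≤ L with L > 0, let f ∈ S^{1,1}_{μ,L}, let g : V → ℝ be convex, F = f + g, and let x* be a global minimizer of F. Under the OAG Method-I iteration (γ_0 > 0; L·α_k² = γ_k(1 + α_k) with α_k > 0; γ_{k+1} = (γ_k + μα_k)/(1 + α_k); y_k = (x_k + α_k v_k)/(1 + α_k); G_k satisfying g(z) ≥ g(y_k − G_k/L) + ⟨G_k − ∇f(y_k), z − (y_k − G_k/L)⟩ for all z ∈ V; x_{k+1} = y_k − (1/L)G_k; v_{k+1} = (γ_k v_k + μα_k y_k − α_k G_k)/(γ_k + μα_k)), the Lyapunov function 𝓛_k = F(x_k) − F(x*) + (γ_k/2)‖v_k − x*‖² satisfies, for all k ≥ 0: 𝓛_k ≤ 𝓛_0 · min{ 4L/(√γ_0·k + 2√L)², (1 + √(min{γ_0, μ}/L))^{−k} }; and if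 γ_0 ≥ L, for all k ≥ 1: 𝓛_k ≤ (F(x_0) − F(x*) + (L/2)‖v_0 − x*‖²) · min{ 4/k², (1 + √(μ/L))^{1−k} }. -/
/-!
The Lyapunov function contracts by the factor `1 + α_k` at every step. The composite gradient
inequality, taken at `x_k` and at `x⋆` with weights `1` and `α_k`, controls the function values,
and the update of `v` is exactly the one for which the distance terms close up: the defect is
`μ α_k / γ_k · ‖α_k G_k - γ_k (v_k - y_k)‖² ≥ 0`. Hence `𝓛_k ≤ λ_k 𝓛_0` with
`λ_k = ∏_{i<k} (1 + α_i)⁻¹`. Since `γ_k ≥ γ_0 λ_k` and `L α_k² = γ_k (1 + α_k)`, the quantity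
`1 / √λ_k` grows by at least `√(γ_0 / L) / 2` per step, which is the `O(1/k²)` rate; since
`γ_k ≥ min(γ_0, μ)`, also `α_k ≥ √(min(γ_0, μ) / L)`, which is the linear rate. When `γ_0 ≥ L`,
the first step already replaces `γ_0` by `L` in the initial value.
-/

open RealInnerProductSpace

section InnerProductSpace

variable {V : Type*} [NormedAddCommGroup V] [InnerProductSpace ℝ V]

lemma norm_sq_estimate_update_identity (a b G : V) (γ β α : ℝ) :
    γ * ‖γ • a + β • b - α • G‖ ^ 2 + β * ‖α • G - γ • (a - b)‖ ^ 2 =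
      (γ + β) * (γ * (γ * ‖a‖ ^ 2 + β * ‖b‖ ^ 2 - 2 * α * ⟪G, a⟫) + α ^ 2 * ‖G‖ ^ 2) := by
  simp only [← real_inner_self_eq_norm_sq, inner_sub_left, inner_sub_right, inner_add_left,
    inner_add_right, real_inner_smul_left, real_inner_smul_right, real_inner_comm a b,
    real_inner_comm a G, real_inner_comm b G]
  ring

lemma half_norm_sq_le_of_estimate_update {a b G w : V} {γ β α L : ℝ} (hγ : 0 < γ) (hβ : 0 ≤ β)
    (hL : 0 < L) (hstep : L * α ^ 2 = γ * (1 + α))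
    (hw : (γ + β) • w = γ • a + β • b - α • G) :
    (γ + β) / 2 * ‖w‖ ^ 2 ≤
      γ / 2 * ‖a‖ ^ 2 + β / 2 * ‖b‖ ^ 2 - α * ⟪G, a⟫ + (1 + α) / (2 * L) * ‖G‖ ^ 2 := by
  have hid := norm_sq_estimate_update_identity a b G γ β α
  rw [← hw, norm_smul, Real.norm_eq_abs, abs_of_pos (by positivity)] at hid
  have hα : α ^ 2 = γ * ((1 + α) / L) := by field_simp; linarith
  have hdefect : 0 ≤ β * ‖α • G - γ • (a - b)‖ ^ 2 := by positivity
  refine le_of_mul_le_mul_left ?_ (by positivity : 0 < 2 * γ * (γ + β))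
  rw [hα] at hid
  linear_combination hid + hdefect

variable [CompleteSpace V] {f : V → ℝ} {f' : V → V} {L : ℝ}

lemma le_add_inner_add_of_lipschitz_gradient (hdiff : ∀ z, HasGradientAt f (f' z) z)
    (hlip : ∀ z w : V, ‖f' z - f' w‖ ≤ L * ‖z - w‖) (z w : V) :
    f z ≤ f w + ⟪f' w, z - w⟫ + L / 2 * ‖z - w‖ ^ 2 := by
  set u := z - w
  let φ : ℝ → ℝ := fun t => f (w + t • u) - (t * ⟪f' w, u⟫ + L / 2 * t ^ 2 * ‖u‖ ^ 2)
  have hφ : ∀ t, HasDerivAt φ (⟪f' (w + t • u), u⟫ - ⟪f' w, u⟫ - L * t * ‖u‖ ^ 2) t := by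
    intro t
    have hline : HasDerivAt (fun s : ℝ => w + s • u) u t := by
      simpa using ((hasDerivAt_id t).smul_const u).const_add w
    refine (((hdiff (w + t • u)).hasFDerivAt.comp_hasDerivAt t hline).sub
      (((hasDerivAt_id t).mul_const ⟪f' w, u⟫).add
        (((hasDerivAt_pow 2 t).const_mul (L / 2)).mul_const (‖u‖ ^ 2)))).congr_deriv ?_
    simp only [InnerProductSpace.toDual_apply_apply]
    ring
  have hanti : AntitoneOn φ (Set.Ici 0) := by
    refine antitoneOn_of_hasDerivWithinAt_nonpos (convex_Ici 0)
      (fun t _ => (hφ t).continuousAt.continuousWithinAt) (fun t _ => (hφ t).hasDerivWithinAt) ?_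
    intro t ht
    rw [interior_Ici, Set.mem_Ioi] at ht
    have hdist : ‖f' (w + t • u) - f' w‖ ≤ L * (t * ‖u‖) := by
      simpa [norm_smul, abs_of_pos ht] using hlip (w + t • u) w
    calc ⟪f' (w + t • u), u⟫ - ⟪f' w, u⟫ - L * t * ‖u‖ ^ 2
        = ⟪f' (w + t • u) - f' w, u⟫ - L * t * ‖u‖ ^ 2 := by rw [inner_sub_left]
      _ ≤ ‖f' (w + t • u) - f' w‖ * ‖u‖ - L * t * ‖u‖ ^ 2 := by
          gcongr; exact real_inner_le_norm _ _
      _ ≤ L * (t * ‖u‖) * ‖u‖ - L * t * ‖u‖ ^ 2 := by gcongr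
      _ = 0 := by ring
  have h01 := hanti Set.self_mem_Ici (Set.mem_Ici.mpr zero_le_one) zero_le_one
  simp only [φ, u, one_smul, zero_smul, add_zero, one_mul, zero_mul, one_pow, add_sub_cancel] at h01
  linarith

end InnerProductSpace

namespace OAG

section Step

variable {V : Type*} [NormedAddCommGroup V] [InnerProductSpace ℝ V] [CompleteSpace V]
  {f : V → ℝ} {f' : V → V} {μ L : ℝ}

lemma composite_gradient_step {g : V → ℝ} (hdiff : ∀ z, HasGradientAt f (f' z) z)
    (hconv : ∀ z w : V, f z - f w - ⟪f' w, z - w⟫ ≥ μ / 2 * ‖z - w‖ ^ 2)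
    (hlip : ∀ z w : V, ‖f' z - f' w‖ ≤ L * ‖z - w‖) (hL : 0 < L) {y G : V}
    (hG : ∀ z : V, g z ≥ g (y - (1 / L) • G) + ⟪G - f' y, z - (y - (1 / L) • G)⟫) (z : V) :
    f (y - (1 / L) • G) + g (y - (1 / L) • G) ≤
      f z + g z + ⟪G, y - z⟫ - 1 / (2 * L) * ‖G‖ ^ 2 - μ / 2 * ‖z - y‖ ^ 2 := by
  have hdescent := le_add_inner_add_of_lipschitz_gradient hdiff hlip (y - (1 / L) • G) y
  have hstrong := hconv z y
  have hsub := hG z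
  have hz : z - (y - (1 / L) • G) = (z - y) + (1 / L) • G := by abel
  rw [hz] at hsub
  rw [sub_sub_cancel_left, norm_neg, norm_smul, Real.norm_eq_abs, abs_of_pos (by positivity),
    inner_neg_right, real_inner_smul_right] at hdescent
  rw [inner_add_right, real_inner_smul_right, inner_sub_left, inner_sub_left,
    real_inner_self_eq_norm_sq] at hsub
  have hyz : ⟪G, y - z⟫ = -⟪G, z - y⟫ := by rw [← inner_neg_right, neg_sub]
  rw [hyz]
  field_simp at hdescent hsub ⊢
  linarith [mul_le_mul_of_nonneg_left hstrong.le hL.le]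

lemma lyapunov_step {g : V → ℝ} (hdiff : ∀ z, HasGradientAt f (f' z) z)
    (hconv : ∀ z w : V, f z - f w - ⟪f' w, z - w⟫ ≥ μ / 2 * ‖z - w‖ ^ 2)
    (hlip : ∀ z w : V, ‖f' z - f' w‖ ≤ L * ‖z - w‖) (hμ : 0 ≤ μ) (hL : 0 < L)
    {γ γ' α : ℝ} (hα : 0 < α) (hstep : L * α ^ 2 = γ * (1 + α))
    (hγ' : γ' = (γ + μ * α) / (1 + α)) {xstar x y v v' G : V}
    (hy : (1 + α) • y = x + α • v)
    (hG : ∀ z : V, g z ≥ g (y - (1 / L) • G) + ⟪G - f' y, z - (y - (1 / L) • G)⟫)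
    (hv' : (γ + μ * α) • v' = γ • v + (μ * α) • y - α • G) :
    ((f (y - (1 / L) • G) + g (y - (1 / L) • G)) - (f xstar + g xstar)
        + γ' / 2 * ‖v' - xstar‖ ^ 2) * (1 + α) ≤
      (f x + g x) - (f xstar + g xstar) + γ / 2 * ‖v - xstar‖ ^ 2 := by
  have hγ : 0 < γ := by nlinarith [mul_pos hL (pow_pos hα 2)]
  have hfrom_x := composite_gradient_step hdiff hconv hlip hL hG x
  have hfrom_xstar := composite_gradient_step hdiff hconv hlip hL hG xstar
  have hdist := half_norm_sq_le_of_estimate_update (a := v - xstar) (b := y - xstar)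
    (G := G) (w := v' - xstar) hγ (by positivity : 0 ≤ μ * α) hL hstep
    (by rw [smul_sub, hv']; module)
  have hmomentum : ⟪G, y - x⟫ + α * ⟪G, y - xstar⟫ = α * ⟪G, v - xstar⟫ := by
    rw [← real_inner_smul_right, ← inner_add_right, ← real_inner_smul_right]
    congr 1
    rw [show x = (1 + α) • y - α • v by rw [hy]; abel]
    module
  have hγ' : γ' / 2 * ‖v' - xstar‖ ^ 2 * (1 + α) = (γ + μ * α) / 2 * ‖v' - xstar‖ ^ 2 := by
    rw [hγ']; field_simp
  rw [norm_sub_rev xstar y] at hfrom_xstar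
  have hx_nonneg : 0 ≤ μ / 2 * ‖x - y‖ ^ 2 := by positivity
  linear_combination hfrom_x + mul_le_mul_of_nonneg_left hfrom_xstar hα.le + hdist + hx_nonneg
    + hmomentum + hγ'

end Step

noncomputable def decayFactor (α : ℕ → ℝ) (k : ℕ) : ℝ := ∏ i ∈ Finset.range k, (1 + α i)⁻¹

section DecayFactor

variable {α : ℕ → ℝ}

@[simp] lemma decayFactor_zero : decayFactor α 0 = 1 := by simp [decayFactor]

lemma decayFactor_succ (k : ℕ) : decayFactor α (k + 1) = decayFactor α k * (1 + α k)⁻¹ :=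
  Finset.prod_range_succ _ _

lemma decayFactor_pos (hα : ∀ k, 0 ≤ α k) (k : ℕ) : 0 < decayFactor α k :=
  Finset.prod_pos fun i _ => inv_pos.mpr (by linarith [hα i])

lemma decayFactor_le_inv_pow {c : ℝ} (hc : 0 ≤ c) (hα : ∀ k, c ≤ α k) (k : ℕ) :
    decayFactor α k ≤ ((1 + c) ^ k)⁻¹ := by
  calc decayFactor α k ≤ ∏ _i ∈ Finset.range k, (1 + c)⁻¹ :=
        Finset.prod_le_prod (fun i _ => inv_nonneg.mpr (by linarith [hα i]))
          fun i _ => inv_anti₀ (by linarith) (by linarith [hα i])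
    _ = ((1 + c) ^ k)⁻¹ := by simp

lemma le_decayFactor_mul_of_step {u : ℕ → ℝ} (hα : ∀ k, 0 ≤ α k)
    (hu : ∀ k, u (k + 1) * (1 + α k) ≤ u k) (k : ℕ) : u k ≤ decayFactor α k * u 0 := by
  induction k with
  | zero => simp
  | succ n ih =>
    have hpos : 0 < 1 + α n := by linarith [hα n]
    rw [decayFactor_succ, mul_right_comm, ← div_eq_mul_inv, le_div_iff₀ hpos]
    exact (hu n).trans ih

end DecayFactor

section Parameters

variable {μ L : ℝ} {γ α : ℕ → ℝ}

lemma gamma_pos (hL : 0 < L) (hα : ∀ k, 0 < α k)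
    (hstep : ∀ k, L * α k ^ 2 = γ k * (1 + α k)) (k : ℕ) : 0 < γ k := by
  nlinarith [hstep k, hα k, mul_pos hL (pow_pos (hα k) 2)]

lemma sqrt_div_le_alpha (hL : 0 < L) (hα : ∀ k, 0 < α k)
    (hstep : ∀ k, L * α k ^ 2 = γ k * (1 + α k)) {c : ℝ} (hc : ∀ k, c ≤ γ k) (k : ℕ) :
    Real.sqrt (c / L) ≤ α k := by
  have hγ := gamma_pos hL hα hstep k
  rw [Real.sqrt_le_left (hα k).le, div_le_iff₀ hL]
  nlinarith [hstep k, hα k, hc k]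

lemma le_gamma (hα : ∀ k, 0 ≤ α k) (hγrec : ∀ k, γ (k + 1) = (γ k + μ * α k) / (1 + α k))
    {c : ℝ} (hc0 : c ≤ γ 0) (hcμ : c ≤ μ) (k : ℕ) : c ≤ γ k := by
  induction k with
  | zero => exact hc0
  | succ n ih =>
    rw [hγrec n, le_div_iff₀ (by linarith [hα n])]
    nlinarith [hα n]

lemma gamma_zero_mul_decayFactor_le (hμ : 0 ≤ μ) (hα : ∀ k, 0 ≤ α k)
    (hγrec : ∀ k, γ (k + 1) = (γ k + μ * α k) / (1 + α k)) (k : ℕ) :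
    γ 0 * decayFactor α k ≤ γ k := by
  induction k with
  | zero => simp
  | succ n ih =>
    rw [hγrec n, decayFactor_succ, ← mul_assoc, ← div_eq_mul_inv]
    gcongr
    · linarith [hα n]
    · linarith [mul_nonneg hμ (hα n)]

lemma mul_sqrt_decayFactor_le (hL : 0 < L) (hμ : 0 ≤ μ) (hα : ∀ k, 0 < α k)
    (hstep : ∀ k, L * α k ^ 2 = γ k * (1 + α k))
    (hγrec : ∀ k, γ (k + 1) = (γ k + μ * α k) / (1 + α k)) (k : ℕ) :
    (Real.sqrt (γ 0) * k + 2 * Real.sqrt L) * Real.sqrt (decayFactor α k) ≤ 2 * Real.sqrt L := by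
  induction k with
  | zero => simp
  | succ n ih =>
    have hα0 : ∀ k, 0 ≤ α k := fun k => (hα k).le
    have hγ0 : 0 ≤ γ 0 := (gamma_pos hL hα hstep 0).le
    have hfac := (decayFactor_pos hα0 n).le
    have hAqr : Real.sqrt (γ 0) * Real.sqrt (decayFactor α n) * Real.sqrt (1 + α n) ≤
        Real.sqrt L * α n := by
      calc _ = Real.sqrt (γ 0 * decayFactor α n * (1 + α n)) := by
            rw [Real.sqrt_mul (mul_nonneg hγ0 hfac), Real.sqrt_mul hγ0]
        _ ≤ Real.sqrt (L * α n ^ 2) := by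
            rw [hstep n]
            gcongr
            · linarith [hα n]
            · exact gamma_zero_mul_decayFactor_le hμ hα0 hγrec n
        _ = Real.sqrt L * α n := by rw [Real.sqrt_mul hL.le, Real.sqrt_sq (hα n).le]
    set A := Real.sqrt (γ 0)
    set B := Real.sqrt L
    set q := Real.sqrt (decayFactor α n)
    set r := Real.sqrt (1 + α n)
    have hr2 : r ^ 2 = 1 + α n := Real.sq_sqrt (by linarith [hα n])
    have hr : 1 ≤ r := Real.one_le_sqrt.mpr (by linarith [hα n])
    -- `α = r² - 1 = (r - 1)(r + 1) ≤ 2 r (r - 1)`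
    have hgain : A * q ≤ 2 * B * (r - 1) := by
      have hB : 0 ≤ B := Real.sqrt_nonneg _
      refine le_of_mul_le_mul_right ?_ (by linarith : 0 < r)
      nlinarith [mul_nonneg hB (mul_nonneg (sub_nonneg.mpr hr) (sub_nonneg.mpr hr))]
    rw [decayFactor_succ, Real.sqrt_mul hfac, Real.sqrt_inv,
      ← div_eq_mul_inv, mul_div_assoc', div_le_iff₀ (by linarith)]
    calc (A * ↑(n + 1) + 2 * B) * q = (A * n + 2 * B) * q + A * q := by push_cast; ring
      _ ≤ 2 * B + 2 * B * (r - 1) := add_le_add ih hgain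
      _ = 2 * B * r := by ring

lemma sq_mul_decayFactor_le (hL : 0 < L) (hμ : 0 ≤ μ) (hα : ∀ k, 0 < α k)
    (hstep : ∀ k, L * α k ^ 2 = γ k * (1 + α k))
    (hγrec : ∀ k, γ (k + 1) = (γ k + μ * α k) / (1 + α k)) (k : ℕ) :
    (Real.sqrt (γ 0) * k + 2 * Real.sqrt L) ^ 2 * decayFactor α k ≤ 4 * L := by
  have h := pow_le_pow_left₀ (by positivity) (mul_sqrt_decayFactor_le hL hμ hα hstep hγrec k) 2
  rwa [mul_pow, Real.sq_sqrt (decayFactor_pos (fun k => (hα k).le) k).le, mul_pow,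
    Real.sq_sqrt hL.le, show (2 : ℝ) ^ 2 * L = 4 * L by norm_num] at h

variable {u : ℕ → ℝ}

lemma le_mul_min_rate (hL : 0 < L) (hμ : 0 ≤ μ) (hα : ∀ k, 0 < α k)
    (hstep : ∀ k, L * α k ^ 2 = γ k * (1 + α k))
    (hγrec : ∀ k, γ (k + 1) = (γ k + μ * α k) / (1 + α k))
    (hu : ∀ k, u (k + 1) * (1 + α k) ≤ u k) (hu0 : 0 ≤ u 0) (k : ℕ) :
    u k ≤ u 0 * min (4 * L / (Real.sqrt (γ 0) * k + 2 * Real.sqrt L) ^ 2)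
      (((1 + Real.sqrt (min (γ 0) μ / L)) ^ k)⁻¹) := by
  have hα0 : ∀ k, 0 ≤ α k := fun k => (hα k).le
  have hX : 0 < Real.sqrt (γ 0) * k + 2 * Real.sqrt L := by
    have := Real.sqrt_pos.mpr hL
    positivity
  have hsublinear : decayFactor α k ≤ 4 * L / (Real.sqrt (γ 0) * k + 2 * Real.sqrt L) ^ 2 := by
    rw [le_div_iff₀ (by positivity), mul_comm]
    exact sq_mul_decayFactor_le hL hμ hα hstep hγrec k
  have hlinear : decayFactor α k ≤ ((1 + Real.sqrt (min (γ 0) μ / L)) ^ k)⁻¹ :=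
    decayFactor_le_inv_pow (Real.sqrt_nonneg _) (sqrt_div_le_alpha hL hα hstep
      (le_gamma hα0 hγrec (min_le_left _ _) (min_le_right _ _))) k
  rw [mul_comm]
  exact (le_decayFactor_mul_of_step hα0 hu k).trans
    (mul_le_mul_of_nonneg_right (le_min hsublinear hlinear) hu0)

lemma le_sublinear_of_le_gamma_zero (hL : 0 < L) (hμ : 0 ≤ μ) (hα : ∀ k, 0 < α k)
    (hstep : ∀ k, L * α k ^ 2 = γ k * (1 + α k))
    (hγrec : ∀ k, γ (k + 1) = (γ k + μ * α k) / (1 + α k))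
    (hu : ∀ k, u (k + 1) * (1 + α k) ≤ u k) {E r : ℝ} (hE : 0 ≤ E) (hr : 0 ≤ r)
    (hu0 : u 0 = E + γ 0 / 2 * r) (hγL : L ≤ γ 0) {k : ℕ} (hk : k ≠ 0) :
    u k ≤ (E + L / 2 * r) * (4 / (k : ℝ) ^ 2) := by
  have hγ0 : 0 < γ 0 := hL.trans_le hγL
  have hγk : γ 0 * (k ^ 2 * decayFactor α k) ≤ 4 * L := by
    have hsq : (Real.sqrt (γ 0) * k) ^ 2 ≤ (Real.sqrt (γ 0) * k + 2 * Real.sqrt L) ^ 2 := by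
      gcongr
      exact le_add_of_nonneg_right (by positivity)
    rw [mul_pow, Real.sq_sqrt hγ0.le] at hsq
    nlinarith [sq_mul_decayFactor_le hL hμ hα hstep hγrec k,
      decayFactor_pos (fun k => (hα k).le) k]
  have hk4 : k ^ 2 * decayFactor α k ≤ 4 :=
    le_of_mul_le_mul_left (by linarith : γ 0 * (k ^ 2 * decayFactor α k) ≤ γ 0 * 4) hγ0
  rw [mul_div_assoc', le_div_iff₀ (by positivity)]
  calc u k * k ^ 2 ≤ decayFactor α k * u 0 * k ^ 2 :=
        mul_le_mul_of_nonneg_right (le_decayFactor_mul_of_step (fun k => (hα k).le) hu k)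
          (by positivity)
    _ = (k ^ 2 * decayFactor α k) * E + (γ 0 * (k ^ 2 * decayFactor α k)) / 2 * r := by
        rw [hu0]; ring
    _ ≤ 4 * E + 4 * L / 2 * r := by gcongr
    _ = (E + L / 2 * r) * 4 := by ring

lemma le_linear_of_le_gamma_zero (hL : 0 < L) (hμL : μ ≤ L) (hα : ∀ k, 0 < α k)
    (hstep : ∀ k, L * α k ^ 2 = γ k * (1 + α k))
    (hγrec : ∀ k, γ (k + 1) = (γ k + μ * α k) / (1 + α k))
    (hu : ∀ k, u (k + 1) * (1 + α k) ≤ u k) (hu_nonneg : ∀ k, 0 ≤ u k) {E r : ℝ}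
    (hE : 0 ≤ E) (hr : 0 ≤ r) (hu0 : u 0 = E + γ 0 / 2 * r) (hγL : L ≤ γ 0) (k : ℕ) :
    u (k + 1) ≤ (E + L / 2 * r) * ((1 + Real.sqrt (μ / L)) ^ k)⁻¹ := by
  have hα0 : ∀ k, 0 ≤ α k := fun k => (hα k).le
  -- one step from `u 0` already replaces `γ 0` by `L`, since `γ 0 = L α₀² / (1 + α₀) ≤ L (1 + α₀)`
  have hu1 : u 1 ≤ E + L / 2 * r := by
    have hγ0 : γ 0 ≤ L * (1 + α 0) := by nlinarith [hstep 0, hα 0]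
    refine le_of_mul_le_mul_right ?_ (by linarith [hα 0] : 0 < 1 + α 0)
    nlinarith [hu 0, mul_le_mul_of_nonneg_right hγ0 hr, hα 0]
  have hshift := le_decayFactor_mul_of_step (α := fun j => α (j + 1)) (u := fun j => u (j + 1))
    (fun j => hα0 (j + 1)) (fun j => hu (j + 1)) k
  have hrate := decayFactor_le_inv_pow (α := fun j => α (j + 1)) (Real.sqrt_nonneg (μ / L))
    (fun j => sqrt_div_le_alpha hL hα hstep (le_gamma hα0 hγrec (hμL.trans hγL) le_rfl) (j + 1)) k
  calc u (k + 1) ≤ decayFactor (fun j => α (j + 1)) k * u 1 := hshift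
    _ ≤ ((1 + Real.sqrt (μ / L)) ^ k)⁻¹ * (E + L / 2 * r) :=
        mul_le_mul hrate hu1 (hu_nonneg 1) (by positivity)
    _ = _ := mul_comm _ _

end Parameters

end OAG

open OAG

theorem stmt14_general {V : Type*} [NormedAddCommGroup V] [InnerProductSpace ℝ V] [CompleteSpace V]
    (μ L : ℝ) (hμ : 0 ≤ μ) (hμL : μ ≤ L) (hL : 0 < L) (f : V → ℝ) (f' : V → V)
    (hdiff : ∀ z, HasGradientAt f (f' z) z)
    (hconv : ∀ z w : V, f z - f w - ⟪f' w, z - w⟫ ≥ μ / 2 * ‖z - w‖ ^ 2)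
    (hlip : ∀ z w : V, ‖f' z - f' w‖ ≤ L * ‖z - w‖)
    (g : V → ℝ)
    (xstar : V) (hmin : ∀ z, f xstar + g xstar ≤ f z + g z)
    (γ α : ℕ → ℝ) (hα : ∀ k, 0 < α k)
    (hstep : ∀ k, L * (α k) ^ 2 = γ k * (1 + α k))
    (x y v G : ℕ → V)
    (hγrec : ∀ k, γ (k + 1) = (γ k + μ * α k) / (1 + α k))
    (hyrec : ∀ k, (1 + α k) • y k = x k + α k • v k)
    (hG : ∀ k, ∀ z : V, g z ≥ g (y k - (1 / L) • G k) +
      ⟪G k - f' (y k), z - (y k - (1 / L) • G k)⟫)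
    (hxrec : ∀ k, x (k + 1) = y k - (1 / L) • G k)
    (hvrec : ∀ k, (γ k + μ * α k) • v (k + 1) =
      γ k • v k + (μ * α k) • y k - α k • G k) :
    (∀ k : ℕ,
      (f (x k) + g (x k)) - (f xstar + g xstar) + γ k / 2 * ‖v k - xstar‖ ^ 2 ≤
        ((f (x 0) + g (x 0)) - (f xstar + g xstar) + γ 0 / 2 * ‖v 0 - xstar‖ ^ 2) *
          min (4 * L / (Real.sqrt (γ 0) * k + 2 * Real.sqrt L) ^ 2)
            (((1 + Real.sqrt (min (γ 0) μ / L)) ^ k)⁻¹)) ∧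
    (γ 0 ≥ L → ∀ k : ℕ, 1 ≤ k →
      (f (x k) + g (x k)) - (f xstar + g xstar) + γ k / 2 * ‖v k - xstar‖ ^ 2 ≤
        ((f (x 0) + g (x 0)) - (f xstar + g xstar) + L / 2 * ‖v 0 - xstar‖ ^ 2) *
          min (4 / (k : ℝ) ^ 2) (((1 + Real.sqrt (μ / L)) ^ (k - 1))⁻¹)) := by
  let lyap : ℕ → ℝ := fun k =>
    (f (x k) + g (x k)) - (f xstar + g xstar) + γ k / 2 * ‖v k - xstar‖ ^ 2
  have hlyap_step : ∀ k, lyap (k + 1) * (1 + α k) ≤ lyap k := fun k => by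
    simp only [lyap, hxrec k]
    exact lyapunov_step hdiff hconv hlip hμ hL (hα k) (hstep k) (hγrec k) (hyrec k) (hG k)
      (hvrec k)
  have hgap : ∀ z, 0 ≤ (f z + g z) - (f xstar + g xstar) := fun z => sub_nonneg.mpr (hmin z)
  have hlyap_nonneg : ∀ k, 0 ≤ lyap k := fun k =>
    add_nonneg (hgap (x k)) (by have := gamma_pos hL hα hstep k; positivity)
  refine ⟨le_mul_min_rate hL hμ hα hstep hγrec hlyap_step (hlyap_nonneg 0), fun hγL k hk => ?_⟩
  obtain ⟨j, rfl⟩ := Nat.exists_eq_add_of_le' hk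
  rw [Nat.add_sub_cancel, mul_min_of_nonneg _ _ (add_nonneg (hgap (x 0)) (by positivity))]
  exact le_min
    (le_sublinear_of_le_gamma_zero hL hμ hα hstep hγrec hlyap_step (hgap (x 0)) (sq_nonneg _)
      rfl hγL j.succ_ne_zero)
    (le_linear_of_le_gamma_zero hL hμL hα hstep hγrec hlyap_step hlyap_nonneg (hgap (x 0))
      (sq_nonneg _) rfl hγL j)

theorem stmt14 {V : Type*} [NormedAddCommGroup V] [InnerProductSpace ℝ V] [CompleteSpace V]
    (μ L : ℝ) (hμ : 0 ≤ μ) (hμL : μ ≤ L) (hL : 0 < L) (f : V → ℝ) (f' : V → V)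
    (hdiff : ∀ z, HasGradientAt f (f' z) z)
    (hconv : ∀ z w : V, f z - f w - ⟪f' w, z - w⟫ ≥ μ / 2 * ‖z - w‖ ^ 2)
    (hlip : ∀ z w : V, ‖f' z - f' w‖ ≤ L * ‖z - w‖)
    (g : V → ℝ) (hg : ConvexOn ℝ Set.univ g)
    (xstar : V) (hmin : ∀ z, f xstar + g xstar ≤ f z + g z)
    (γ α : ℕ → ℝ) (hγ0 : 0 < γ 0) (hα : ∀ k, 0 < α k)
    (hstep : ∀ k, L * (α k) ^ 2 = γ k * (1 + α k))
    (x y v G : ℕ → V)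
    (hγrec : ∀ k, γ (k + 1) = (γ k + μ * α k) / (1 + α k))
    (hyrec : ∀ k, (1 + α k) • y k = x k + α k • v k)
    (hG : ∀ k, ∀ z : V, g z ≥ g (y k - (1 / L) • G k) +
      ⟪G k - f' (y k), z - (y k - (1 / L) • G k)⟫)
    (hxrec : ∀ k, x (k + 1) = y k - (1 / L) • G k)
    (hvrec : ∀ k, (γ k + μ * α k) • v (k + 1) =
      γ k • v k + (μ * α k) • y k - α k • G k) :
    (∀ k : ℕ,
      (f (x k) + g (x k)) - (f xstar + g xstar) + γ k / 2 * ‖v k - xstar‖ ^ 2 ≤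
        ((f (x 0) + g (x 0)) - (f xstar + g xstar) + γ 0 / 2 * ‖v 0 - xstar‖ ^ 2) *
          min (4 * L / (Real.sqrt (γ 0) * k + 2 * Real.sqrt L) ^ 2)
            (((1 + Real.sqrt (min (γ 0) μ / L)) ^ k)⁻¹)) ∧
    (γ 0 ≥ L → ∀ k : ℕ, 1 ≤ k →
      (f (x k) + g (x k)) - (f xstar + g xstar) + γ k / 2 * ‖v k - xstar‖ ^ 2 ≤
        ((f (x 0) + g (x 0)) - (f xstar + g xstar) + L / 2 * ‖v 0 - xstar‖ ^ 2) *
          min (4 / (k : ℝ) ^ 2) (((1 + Real.sqrt (μ / L)) ^ (k - 1))⁻¹)) :=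
  stmt14_general μ L hμ hμL hL f f' hdiff hconv hlip g xstar hmin γ α hα hstep x y v G hγrec hyrec
    hG hxrec hvrec
end
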